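/- arXiv:1708.06862 — 8 statements merged into one kernel-verified Lean document; each statement's English description precedes it below -/
import Mathlib

section
/- Let q be a power of a prime p, let A ∈ GL₂(F_q) with [A] ≠ [I], and let D be the order of [A] in PGL₂(F_q). Then: (i) if A is of type 1 (distinct eigenvalues in F_q), then D > 1 and D divides q−1; (ii) if A is of type 2 (equal eigenvalues in F_q), then D = p; (iii) if A is of type 3 (eigenvalues in F_{q²}∖F_q that are negatives of each other), then D = 2; (iv) if A is of type 4 (eigenvalues in F_{q²}∖F_q that are not negatives of each other), then D divides q+1 and D > 2. -/
open Polynomial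

noncomputable section

namespace PGLAct

variable {F : Type} [Field F]

/-- The composition `A ∘ f = ∑ aᵢ (a x + c)^i (b x + d)^{k-i}` for `A = [[a,b],[c,d]]`. -/
def mcirc (A : Matrix (Fin 2) (Fin 2) F) (f : F[X]) : F[X] :=
  ∑ i ∈ Finset.range (f.natDegree + 1),
    C (f.coeff i) * (C (A 0 0) * X + C (A 1 0)) ^ i *
      (C (A 0 1) * X + C (A 1 1)) ^ (f.natDegree - i)

/-- The composition `[A] ∘ f`: the monic normalization of `A ∘ f`. -/
def pcirc (A : Matrix (Fin 2) (Fin 2) F) (f : F[X]) : F[X] :=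
  C (mcirc A f).leadingCoeff⁻¹ * mcirc A f

/-- The subgroup of scalar matrices in `GL₂(F)`. -/
def scalarSub (F : Type) [Field F] : Subgroup (GL (Fin 2) F) :=
  (Units.map ((Matrix.scalar (Fin 2)).toMonoidHom : F →* Matrix (Fin 2) (Fin 2) F)).range

instance scalarSub_normal (F : Type) [Field F] : (scalarSub F).Normal := by
  constructor
  intro n hn g
  obtain ⟨u, hu⟩ := hn
  refine ⟨u, ?_⟩
  ext : 1
  have hcomm : Commute ((Matrix.scalar (Fin 2)) (u : F)) (g : Matrix (Fin 2) (Fin 2) F) :=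
    Matrix.scalar_commute _ (fun r' => Commute.all _ r') _
  have hval : (n : Matrix (Fin 2) (Fin 2) F) = (Matrix.scalar (Fin 2)) (u : F) := by
    rw [← hu]; rfl
  calc ((Units.map ((Matrix.scalar (Fin 2)).toMonoidHom : F →* Matrix (Fin 2) (Fin 2) F)) u :
        GL (Fin 2) F).val
      = (Matrix.scalar (Fin 2)) (u : F) := rfl
    _ = (g : Matrix (Fin 2) (Fin 2) F) * (Matrix.scalar (Fin 2)) (u : F)
        * ((g⁻¹ : GL (Fin 2) F) : Matrix (Fin 2) (Fin 2) F) := by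
        rw [← hcomm.eq, mul_assoc, ← Units.val_mul, mul_inv_cancel]
        simp
    _ = ((g * n * g⁻¹ : GL (Fin 2) F) : Matrix (Fin 2) (Fin 2) F) := by
        simp [Units.val_mul, hval]

/-- `PGL₂(F)`, the projective general linear group. -/
def PGL2 (F : Type) [Field F] : Type := GL (Fin 2) F ⧸ scalarSub F

instance : Group (PGL2 F) := inferInstanceAs (Group (GL (Fin 2) F ⧸ scalarSub F))

/-- The natural projection `GL₂(F) → PGL₂(F)`, `A ↦ [A]`. -/
def toPGL (F : Type) [Field F] : GL (Fin 2) F →* PGL2 F := QuotientGroup.mk' (scalarSub F)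

/-- The polynomial `F_{A,r} = b x^{q^r+1} - a x^{q^r} + d x - c`. -/
def FAr [Fintype F] (A : Matrix (Fin 2) (Fin 2) F) (r : ℕ) : F[X] :=
  C (A 0 1) * X ^ (Fintype.card F ^ r + 1) - C (A 0 0) * X ^ (Fintype.card F ^ r)
    + C (A 1 1) * X - C (A 1 0)


/-- The σ-product of `A = [[a,b],[c,d]]` and `A₀ = [[a₀,b₀],[c₀,d₀]]`. -/
def sigmaProd (A A0 : Matrix (Fin 2) (Fin 2) F) : Matrix (Fin 2) (Fin 2) F :=
  !![-(A 0 1 * (A0 0 0 * A0 1 0) - A 0 0 * (A0 0 0 * A0 1 1) + A 1 1 * (A0 1 0 * A0 0 1)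
        - A 1 0 * (A0 0 1 * A0 1 1)),
     A 0 1 * A0 0 0 ^ 2 - A 0 0 * (A0 0 0 * A0 0 1) + A 1 1 * (A0 0 0 * A0 0 1)
        - A 1 0 * A0 0 1 ^ 2;
     -(A 0 1 * A0 1 0 ^ 2 - A 0 0 * (A0 1 0 * A0 1 1) + A 1 1 * (A0 1 1 * A0 1 0)
        - A 1 0 * A0 1 1 ^ 2),
     A 0 1 * (A0 0 0 * A0 1 0) - A 0 0 * (A0 1 0 * A0 0 1) + A 1 1 * (A0 1 1 * A0 0 0)
        - A 1 0 * (A0 0 1 * A0 1 1)]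

end PGLAct

/-! Each type is read off from a polynomial identity satisfied by `A`. With distinct eigenvalues in
`F_q` the characteristic polynomial divides `X ^ q - X`, so `A ^ (q - 1) = 1`. With a double
eigenvalue `x`, `A - x` squares to zero, so `A ^ p = x ^ p` by the Frobenius binomial formula.
Cayley–Hamilton reads `A² = tr(A) A - det(A)`, so for non-scalar `A` the class `[A]` has order
dividing `2` exactly when the trace vanishes. With irreducible characteristic polynomial `χ`, a root
`λ ∈ F_q[X]/(χ) ≅ F_{q²}` satisfies `λ ^ (q + 1) = N(λ) ∈ F_q`; hence `χ ∣ X ^ (q + 1) - N(λ)` and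
`A ^ (q + 1)` is scalar. -/

open Polynomial Matrix

namespace PGLAct

variable {F : Type} [Field F]

theorem mem_scalarSub_iff {M : GL (Fin 2) F} :
    M ∈ scalarSub F ↔ (M : Matrix (Fin 2) (Fin 2) F) ∈ Set.range (scalar (Fin 2)) := by
  constructor
  · rintro ⟨u, rfl⟩
    exact ⟨u, rfl⟩
  · rintro ⟨c, hc⟩
    have hc0 : c ≠ 0 := by
      rintro rfl
      exact M.ne_zero (by rw [← hc, map_zero])
    exact ⟨Units.mk0 c hc0, Units.ext hc⟩

theorem toPGL_pow_eq_one_iff {A : GL (Fin 2) F} {n : ℕ} :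
    toPGL F A ^ n = 1 ↔ (A : Matrix (Fin 2) (Fin 2) F) ^ n ∈ Set.range (scalar (Fin 2)) := by
  rw [← map_pow]
  change ((A ^ n : GL (Fin 2) F) : GL (Fin 2) F ⧸ scalarSub F) = 1 ↔ _
  rw [QuotientGroup.eq_one_iff, mem_scalarSub_iff, Units.val_pow_eq_pow_val]

theorem one_lt_orderOf_toPGL [Finite F] {A : GL (Fin 2) F} (hA : toPGL F A ≠ 1) :
    1 < orderOf (toPGL F A) :=
  have : Finite (PGL2 F) := inferInstanceAs (Finite (GL (Fin 2) F ⧸ scalarSub F))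
  lt_of_le_of_ne' (orderOf_pos _) fun h ↦ hA (orderOf_eq_one_iff.mp h)

end PGLAct

open PGLAct

namespace Matrix

theorem sq_eq_trace_smul_sub_scalar_det {R : Type*} [CommRing R] (B : Matrix (Fin 2) (Fin 2) R) :
    B ^ 2 = B.trace • B - scalar (Fin 2) B.det := by
  ext i j
  fin_cases i <;> fin_cases j <;>
    simp [sq, mul_apply, trace_fin_two, det_fin_two] <;> ring

theorem sq_mem_range_scalar_iff {K : Type*} [Field K] {B : Matrix (Fin 2) (Fin 2) K}
    (hB : B ∉ Set.range (scalar (Fin 2))) :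
    B ^ 2 ∈ Set.range (scalar (Fin 2)) ↔ B.trace = 0 := by
  rw [sq_eq_trace_smul_sub_scalar_det]
  constructor
  · rintro ⟨c, hc⟩
    by_contra htr
    refine hB ⟨B.trace⁻¹ * (c + B.det), ?_⟩
    rw [map_mul, map_add, hc, sub_add_cancel, scalar_apply, ← smul_eq_diagonal_mul,
      inv_smul_smul₀ htr]
  · intro htr
    exact ⟨-B.det, by rw [htr, zero_smul, zero_sub, map_neg]⟩

theorem pow_char_eq_scalar_of_charpoly_eq_sq {R : Type*} [CommRing R] (p : ℕ) [Fact p.Prime]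
    [CharP R p] {B : Matrix (Fin 2) (Fin 2) R} {x : R} (hB : B.charpoly = (X - C x) ^ 2) :
    B ^ p = scalar (Fin 2) (x ^ p) := by
  set N := B - scalar (Fin 2) x
  have hN : N ^ 2 = 0 := by
    have h := aeval_self_charpoly B
    rwa [hB, map_pow, map_sub, aeval_X, aeval_C] at h
  have hcomm : Commute (scalar (Fin 2) x) N := scalar_commute x (fun _ ↦ Commute.all x _) N
  calc B ^ p = (scalar (Fin 2) x + N) ^ p := by rw [add_sub_cancel]
    _ = scalar (Fin 2) x ^ p + N ^ p := add_pow_char_of_commute p hcomm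
    _ = scalar (Fin 2) (x ^ p) := by
      rw [← map_pow, pow_eq_zero_of_le (Fact.out : p.Prime).two_le hN, add_zero]

variable {F n : Type*} [Field F] [Fintype F] [Fintype n] [DecidableEq n]

theorem pow_card_eq_self_of_charpoly_eq_prod {B : Matrix n n F} {s : Multiset F} (hs : s.Nodup)
    (hB : B.charpoly = (s.map fun a ↦ X - C a).prod) :
    B ^ Fintype.card F = B := by
  have hdvd : B.charpoly ∣ X ^ Fintype.card F - X := by
    rw [hB, Multiset.prod_X_sub_C_dvd_iff_le_roots
      (FiniteField.X_pow_card_sub_X_ne_zero F Fintype.one_lt_card),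
      FiniteField.roots_X_pow_card_sub_X, Multiset.le_iff_subset hs]
    exact fun a _ ↦ Finset.mem_univ_val a
  simpa [sub_eq_zero] using aeval_eq_zero_of_dvd_aeval_eq_zero hdvd (aeval_self_charpoly B)

theorem pow_mem_range_scalar_of_irreducible_charpoly {B : Matrix n n F}
    (hB : Irreducible B.charpoly) :
    B ^ ((Fintype.card F ^ Fintype.card n - 1) / (Fintype.card F - 1)) ∈
      Set.range (scalar n) := by
  have := Fact.mk hB
  have : Module.Finite F (AdjoinRoot B.charpoly) := B.charpoly_monic.finite_adjoinRoot
  have : Finite (AdjoinRoot B.charpoly) := Module.finite_of_finite F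
  have hcard : Nat.card (AdjoinRoot B.charpoly) = Fintype.card F ^ Fintype.card n := by
    rw [Module.natCard_eq_pow_finrank (K := F), (AdjoinRoot.powerBasis' B.charpoly_monic).finrank,
      Nat.card_eq_fintype_card, AdjoinRoot.powerBasis'_dim, charpoly_natDegree_eq_dim]
  have hnorm := FiniteField.algebraMap_norm_eq_pow (K := F) (x := AdjoinRoot.root B.charpoly)
  rw [hcard, Nat.card_eq_fintype_card] at hnorm
  set e := (Fintype.card F ^ Fintype.card n - 1) / (Fintype.card F - 1)
  set c := Algebra.norm F (AdjoinRoot.root B.charpoly)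
  have hdvd : B.charpoly ∣ X ^ e - C c := by
    rw [← AdjoinRoot.mk_eq_mk, map_pow, AdjoinRoot.mk_X, AdjoinRoot.mk_C, ← hnorm]
    rfl
  have hBe := aeval_eq_zero_of_dvd_aeval_eq_zero hdvd (aeval_self_charpoly B)
  rw [map_sub, map_pow, aeval_X, aeval_C, sub_eq_zero] at hBe
  exact ⟨c, hBe.symm⟩

theorem GeneralLinearGroup.pow_card_sub_one_eq_one_of_charpoly_eq_prod {A : GL n F}
    {s : Multiset F} (hs : s.Nodup) (hA : A.val.charpoly = (s.map fun a ↦ X - C a).prod) :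
    A ^ (Fintype.card F - 1) = 1 := by
  have hAq : A ^ Fintype.card F = A :=
    Units.ext (by simpa using pow_card_eq_self_of_charpoly_eq_prod hs hA)
  rw [← mul_eq_right (b := A), ← pow_succ, Nat.sub_add_cancel Fintype.card_pos, hAq]

end Matrix

/-- The order `D` of `[A]` in `PGL₂(F_q)` according to the type of `A`:
type 1: `D > 1` divides `q-1`; type 2: `D = p`; type 3: `D = 2`; type 4: `D > 2` divides `q+1`. -/
theorem order_by_type {F : Type} [Field F] [Fintype F] (p : ℕ) (hp : p.Prime) [CharP F p]
    (A : GL (Fin 2) F) (hA : PGLAct.toPGL F A ≠ 1)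
    (D : ℕ) (hD : D = orderOf (PGLAct.toPGL F A)) :
    ((∃ x y : F, x ≠ y ∧ Matrix.charpoly A.val = (X - C x) * (X - C y)) →
      1 < D ∧ D ∣ Fintype.card F - 1) ∧
    ((∃ x : F, Matrix.charpoly A.val = (X - C x) ^ 2) → D = p) ∧
    ((Irreducible (Matrix.charpoly A.val) ∧ Matrix.trace A.val = 0) → D = 2) ∧
    ((Irreducible (Matrix.charpoly A.val) ∧ Matrix.trace A.val ≠ 0) →
      D ∣ Fintype.card F + 1 ∧ 2 < D) := by
  set q := Fintype.card F
  have hq : 1 < q := Fintype.one_lt_card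
  have hnonscalar : A.val ∉ Set.range (scalar (Fin 2)) := by
    rw [← pow_one A.val, ← toPGL_pow_eq_one_iff, pow_one]
    exact hA
  have hD1 : 1 < D := hD ▸ one_lt_orderOf_toPGL hA
  refine ⟨fun ⟨x, y, hxy, hch⟩ ↦ ⟨hD1, ?_⟩, fun ⟨x, hch⟩ ↦ ?_, fun ⟨_, htr⟩ ↦ ?_,
    fun ⟨hirr, htr⟩ ↦ ⟨?_, ?_⟩⟩
  · have hA1 : A ^ (q - 1) = 1 :=
      GeneralLinearGroup.pow_card_sub_one_eq_one_of_charpoly_eq_prod (s := {x, y})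
        (by simpa using hxy) (by simpa using hch)
    exact hD ▸ orderOf_dvd_of_pow_eq_one (by rw [← map_pow, hA1, map_one])
  · have := Fact.mk hp
    exact hD ▸ orderOf_eq_prime (toPGL_pow_eq_one_iff.2
      ⟨x ^ p, (pow_char_eq_scalar_of_charpoly_eq_sq p hch).symm⟩) hA
  · exact hD ▸ orderOf_eq_prime
      (toPGL_pow_eq_one_iff.2 ((sq_mem_range_scalar_iff hnonscalar).2 htr)) hA
  · have he : (q ^ Fintype.card (Fin 2) - 1) / (q - 1) = q + 1 := by
      rw [Fintype.card_fin, ← one_pow 2, Nat.sq_sub_sq, one_pow, Nat.mul_div_cancel _ (by omega)]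
    have hAq : A.val ^ (q + 1) ∈ Set.range (scalar (Fin 2)) := by
      rw [← he]
      exact pow_mem_range_scalar_of_irreducible_charpoly hirr
    exact hD ▸ orderOf_dvd_of_pow_eq_one (toPGL_pow_eq_one_iff.2 hAq)
  · refine lt_of_le_of_ne hD1 fun h ↦ htr ?_
    have hA2 := pow_orderOf_eq_one (toPGL F A)
    rw [← hD, ← h] at hA2
    exact (sq_mem_range_scalar_iff hnonscalar).1 (toPGL_pow_eq_one_iff.1 hA2)
end
end

section
/- Let q be a power of a prime p and let G be a subgroup of PGL₂(F_q) of order p^r with r ≥ 2. Then there is no monic irreducible polynomial f ∈ F_q[x] of degree ≥ 2 such that [A]∘f = f for every [A] ∈ G. -/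
open Polynomial

noncomputable section

/-! Let `α` be a root of `f` in `K = F[x]/(f)`. Invariance of `f` under `[A]` means that the Möbius
map `x ↦ (a x + c) / (b x + d)` permutes the roots of `f`, so it sends `α` to `σ_A α` for some
`σ_A ∈ Gal(K/F)`; as `A` has entries in `F`, `σ_A` commutes with this map. An element of `PGL₂(F)`
of `p`-power order is `[l (1 + N)]` with `N² = 0`, so `A^p` is scalar and `σ_A^p = 1`; and the
only fixed points of a Möbius map `1 + N` with `N ≠ 0` lie in `F`, so `[A] ↦ σ_A` is injective on
`G`. The cyclic group `Gal(K/F)` has at most `p` solutions of `σ^p = 1`, whence `p^r ≤ p`. -/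

theorem Matrix.pow_card_eq_zero_of_isNilpotent {n R : Type*} [Fintype n] [DecidableEq n]
    [CommRing R] [IsDomain R] {M : Matrix n n R} (hM : IsNilpotent M) :
    M ^ Fintype.card n = 0 := by
  have hχ := sub_eq_zero.mp (Matrix.isNilpotent_charpoly_sub_pow_of_isNilpotent hM).eq_zero
  simpa [hχ] using M.aeval_self_charpoly

theorem one_add_pow_char_of_mul_self_eq_zero {A : Type*} [Ring A] (p : ℕ) [Fact p.Prime]
    [CharP A p] {N : A} (hN : N * N = 0) : (1 + N) ^ p = 1 := by
  have hNp : N ^ p = 0 := by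
    rw [← Nat.sub_add_cancel (Fact.out : p.Prime).two_le, pow_add, sq, hN, mul_zero]
  rw [add_pow_char_of_commute p (Commute.one_left N), one_pow, hNp, add_zero]

theorem IsCyclic.card_le_of_injective_of_pow_eq_one {α H : Type*} [Group H] [Finite H] [IsCyclic H]
    {n : ℕ} (hn : 0 < n) {φ : α → H} (hφ : Function.Injective φ) (hpow : ∀ a, φ a ^ n = 1) :
    Nat.card α ≤ n := by
  classical
  have := Fintype.ofFinite H
  calc Nat.card α ≤ Nat.card {h : H // h ^ n = 1} :=
        Nat.card_le_card_of_injective (fun a => ⟨φ a, hpow a⟩)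
          fun a b hab => hφ (congrArg Subtype.val hab)
    _ = Finset.card {h : H | h ^ n = 1} := by rw [Nat.card_eq_fintype_card, Fintype.card_subtype]
    _ ≤ n := IsCyclic.card_pow_eq_one_le hn

theorem AdjoinRoot.exists_algEquiv_root_eq {F : Type*} [Field F] {f : F[X]}
    [hf : Fact (Irreducible f)] {x : AdjoinRoot f} (hx : aeval x f = 0) :
    ∃ σ : AdjoinRoot f ≃ₐ[F] AdjoinRoot f, σ (root f) = x := by
  have := (powerBasis hf.out.ne_zero).finite
  let φ := liftAlgHom f (Algebra.ofId F _) x hx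
  exact ⟨AlgEquiv.ofBijective φ φ.bijective, liftAlgHom_root f _ x hx⟩

namespace PGLAct

section Mobius

variable {F : Type} {K : Type*} [Field F] [Field K] [Algebra F K]

def mobiusDen (M : Matrix (Fin 2) (Fin 2) F) (x : K) : K :=
  algebraMap F K (M 0 1) * x + algebraMap F K (M 1 1)

def mobius (M : Matrix (Fin 2) (Fin 2) F) (x : K) : K :=
  (algebraMap F K (M 0 0) * x + algebraMap F K (M 1 0)) / mobiusDen M x

theorem mobiusDen_ne_zero {M : Matrix (Fin 2) (Fin 2) F} (hM : M.det ≠ 0) {x : K}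
    (hx : x ∉ Set.range (algebraMap F K)) : mobiusDen M x ≠ 0 := by
  intro h
  by_cases hb : M 0 1 = 0
  · rw [mobiusDen, hb, map_zero, zero_mul, zero_add, map_eq_zero] at h
    exact hM (by rw [Matrix.det_fin_two, hb, h]; ring)
  · rw [mobiusDen] at h
    refine hx ⟨-M 1 1 / M 0 1, ?_⟩
    rw [map_div₀, map_neg, div_eq_iff (by simpa using hb)]
    linear_combination -h

theorem mobius_mul (M N : Matrix (Fin 2) (Fin 2) F) {x : K} (hx : mobiusDen N x ≠ 0) :
    mobius (N * M) x = mobius M (mobius N x) := by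
  have h : mobius N x * mobiusDen N x = _ := div_mul_cancel₀ _ hx
  generalize mobius N x = y at h ⊢
  rw [mobius, mobius, ← mul_div_mul_right _ (mobiusDen M y) hx]
  simp only [mobiusDen, Matrix.mul_apply, Fin.sum_univ_two, map_add, map_mul] at h ⊢
  congr 1
  · linear_combination -algebraMap F K (M 0 0) * h
  · linear_combination -algebraMap F K (M 0 1) * h

theorem mobius_smul {l : F} (hl : l ≠ 0) (M : Matrix (Fin 2) (Fin 2) F) (x : K) :
    mobius (l • M) x = mobius M x := by
  simp only [mobius, mobiusDen, Matrix.smul_apply, smul_eq_mul, map_mul, mul_assoc, ← mul_add]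
  exact mul_div_mul_left _ _ (by simpa using hl)

@[simp]
theorem mobius_one (x : K) : mobius (1 : Matrix (Fin 2) (Fin 2) F) x = x := by
  simp [mobius, mobiusDen]

theorem map_mobius {L E : Type*} [Field L] [Algebra F L] [FunLike E K L] [AlgHomClass E F K L]
    (σ : E) (M : Matrix (Fin 2) (Fin 2) F) (x : K) : σ (mobius M x) = mobius M (σ x) := by
  simp only [mobius, mobiusDen, map_div₀, map_add, map_mul, AlgHomClass.commutes]

theorem algEquiv_pow_apply_eq_mobius_pow {σ : K ≃ₐ[F] K} {M : Matrix (Fin 2) (Fin 2) F} {x : K}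
    (hx : mobiusDen M x ≠ 0) (hσ : σ x = mobius M x) (k : ℕ) :
    (σ ^ k) x = mobius (M ^ k) x := by
  induction k with
  | zero => simp
  | succ k ih =>
    rw [pow_succ', AlgEquiv.mul_apply, ih, map_mobius, hσ, ← mobius_mul _ _ hx, ← pow_succ']

/-- When `N₀₁ ≠ 0`, `N² = 0` turns the fixed-point equation of `1 + N` into `(N₀₁ x - N₀₀)² = 0`,
so `x ∈ F`. -/
theorem eq_zero_of_mobius_one_add_eq_self {N : Matrix (Fin 2) (Fin 2) F} (hN : N * N = 0) {x : K}
    (hx : x ∉ Set.range (algebraMap F K)) (hfix : mobius (1 + N) x = x) : N = 0 := by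
  have hden : mobiusDen (1 + N) x ≠ 0 := by
    -- `mobius` takes the junk value `0` where its denominator vanishes
    intro h
    exact hx ⟨0, by rw [map_zero, ← hfix, mobius, h, div_zero]⟩
  rw [mobius, div_eq_iff hden] at hfix
  replace hfix : (1 + algebraMap F K (N 0 0)) * x + algebraMap F K (N 1 0) =
      x * (algebraMap F K (N 0 1) * x + (1 + algebraMap F K (N 1 1))) := by
    simpa [mobiusDen] using hfix
  have h00 : N 0 0 * N 0 0 + N 0 1 * N 1 0 = 0 := by
    simpa [Matrix.mul_apply] using congrFun₂ hN 0 0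
  have h01 : N 0 0 * N 0 1 + N 0 1 * N 1 1 = 0 := by
    simpa [Matrix.mul_apply] using congrFun₂ hN 0 1
  have h11 : N 1 0 * N 0 1 + N 1 1 * N 1 1 = 0 := by
    simpa [Matrix.mul_apply] using congrFun₂ hN 1 1
  by_cases hb : N 0 1 = 0
  · have e00 : N 0 0 = 0 := mul_self_eq_zero.mp (by linear_combination h00 - N 1 0 * hb)
    have e11 : N 1 1 = 0 := mul_self_eq_zero.mp (by linear_combination h11 - N 1 0 * hb)
    have e10 : N 1 0 = 0 := by
      simp only [hb, e00, e11, map_zero] at hfix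
      simpa using hfix
    ext i j
    fin_cases i <;> fin_cases j <;> assumption
  · have e11 : N 1 1 = -N 0 0 := by
      have : N 0 1 * (N 0 0 + N 1 1) = 0 := by linear_combination h01
      linear_combination (mul_eq_zero.mp this).resolve_left hb
    have hsq : (algebraMap F K (N 0 1) * x - algebraMap F K (N 0 0)) ^ 2 = 0 := by
      have h00' := congrArg (algebraMap F K) h00
      simp only [map_add, map_mul, map_zero] at h00'
      rw [e11, map_neg] at hfix
      linear_combination -algebraMap F K (N 0 1) * hfix + h00'
    refine absurd ⟨N 0 0 / N 0 1, ?_⟩ hx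
    rw [map_div₀, div_eq_iff (by simpa using hb)]
    linear_combination -(pow_eq_zero_iff two_ne_zero).mp hsq

theorem notMem_range_algebraMap_of_aeval_eq_zero {f : F[X]} (hf : Irreducible f)
    (hdeg : 2 ≤ f.natDegree) {x : K} (hx : aeval x f = 0) : x ∉ Set.range (algebraMap F K) := by
  rintro ⟨y, rfl⟩
  rw [aeval_algebraMap_apply_eq_algebraMap_eval, map_eq_zero] at hx
  have : f.natDegree = 1 :=
    natDegree_eq_of_degree_eq_some (degree_eq_one_of_irreducible_of_root hf hx)
  omega

theorem mobius_mul_inv_eq_self {A B : GL (Fin 2) F} {x : K} (hx : x ∉ Set.range (algebraMap F K))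
    (h : mobius (A : Matrix (Fin 2) (Fin 2) F) x = mobius (B : Matrix (Fin 2) (Fin 2) F) x) :
    mobius ((A * B⁻¹ : GL (Fin 2) F) : Matrix (Fin 2) (Fin 2) F) x = x := by
  rw [Units.val_mul, mobius_mul _ _ (mobiusDen_ne_zero A.det_ne_zero hx), h,
    ← mobius_mul _ _ (mobiusDen_ne_zero B.det_ne_zero hx), ← Units.val_mul, mul_inv_cancel,
    Units.val_one, mobius_one]

theorem aeval_mcirc (M : Matrix (Fin 2) (Fin 2) F) (f : F[X]) {x : K} (hx : mobiusDen M x ≠ 0) :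
    aeval x (mcirc M f) = mobiusDen M x ^ f.natDegree * aeval (mobius M x) f := by
  rw [mcirc, map_sum, aeval_eq_sum_range (x := mobius M x), Finset.mul_sum]
  refine Finset.sum_congr rfl fun i hi => ?_
  rw [Finset.mem_range] at hi
  simp only [map_mul, map_pow, aeval_C, map_add, aeval_X, mobius, div_pow, Algebra.smul_def]
  rw [show algebraMap F K (M 0 1) * x + algebraMap F K (M 1 1) = mobiusDen M x from rfl,
    pow_sub₀ _ hx (by omega)]
  field_simp

theorem aeval_mobius_eq_zero {f : F[X]} (hf : f.Monic) {M : Matrix (Fin 2) (Fin 2) F}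
    (hM : pcirc M f = f) {x : K} (hx : mobiusDen M x ≠ 0) (hfx : aeval x f = 0) :
    aeval (mobius M x) f = 0 := by
  have hmc : mcirc M f ≠ 0 := fun h => hf.ne_zero (by rw [← hM, pcirc, h, mul_zero])
  have h := congrArg (aeval x) hM
  rw [pcirc, map_mul, aeval_C, aeval_mcirc M f hx, hfx] at h
  simpa [hmc, hx] using h

end Mobius

section PGL

variable {F : Type} [Field F]

theorem toPGL_surjective : Function.Surjective (toPGL F) :=
  QuotientGroup.mk'_surjective _

theorem toPGL_eq_one_iff {A : GL (Fin 2) F} :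
    toPGL F A = 1 ↔ ∃ l : Fˣ, (A : Matrix (Fin 2) (Fin 2) F) = (l : F) • 1 := by
  change ((A : GL (Fin 2) F ⧸ scalarSub F) = 1) ↔ _
  rw [QuotientGroup.eq_one_iff]
  refine exists_congr fun l => ?_
  rw [Units.ext_iff, eq_comm, Matrix.smul_one_eq_diagonal]
  rfl

theorem exists_smul_one_add_of_toPGL_pow_eq_one [Finite F] {p : ℕ} [Fact p.Prime] [CharP F p]
    {A : GL (Fin 2) F} {e : ℕ} (hA : toPGL F A ^ p ^ e = 1) :
    ∃ (l : F) (N : Matrix (Fin 2) (Fin 2) F), l ≠ 0 ∧ N * N = 0 ∧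
      (A : Matrix (Fin 2) (Fin 2) F) = l • (1 + N) := by
  obtain ⟨u, hu⟩ := toPGL_eq_one_iff.mp ((map_pow (toPGL F) A (p ^ e)).trans hA)
  obtain ⟨l, hl⟩ := (iterateFrobeniusEquiv F p e).surjective u
  rw [iterateFrobeniusEquiv_apply, iterateFrobenius_def] at hl
  have hl0 : l ≠ 0 := by
    rintro rfl
    exact u.ne_zero (hl ▸ zero_pow (pow_pos (Fact.out : p.Prime).pos e).ne')
  set N := l⁻¹ • (A : Matrix (Fin 2) (Fin 2) F) - 1
  have hN : IsNilpotent N := ⟨p ^ e, by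
    rw [sub_pow_char_pow_of_commute _ _ (Commute.one_right _), _root_.smul_pow,
      ← Units.val_pow_eq_pow_val, hu, one_pow, smul_smul, inv_pow, hl,
      inv_mul_cancel₀ u.ne_zero, one_smul, sub_self]⟩
  refine ⟨l, N, hl0, by simpa [sq] using Matrix.pow_card_eq_zero_of_isNilpotent hN, ?_⟩
  simp [N, smul_smul, mul_inv_cancel₀ hl0]

theorem toPGL_eq_one_of_mobius_eq_self [Finite F] {p : ℕ} [Fact p.Prime] [CharP F p]
    {A : GL (Fin 2) F} {e : ℕ} (hA : toPGL F A ^ p ^ e = 1) {K : Type*} [Field K] [Algebra F K]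
    {x : K} (hx : x ∉ Set.range (algebraMap F K))
    (hfix : mobius (A : Matrix (Fin 2) (Fin 2) F) x = x) : toPGL F A = 1 := by
  obtain ⟨l, N, hl, hN, hAN⟩ := exists_smul_one_add_of_toPGL_pow_eq_one hA
  rw [hAN, mobius_smul hl] at hfix
  refine toPGL_eq_one_iff.mpr ⟨Units.mk0 l hl, ?_⟩
  rw [hAN, eq_zero_of_mobius_one_add_eq_self hN hx hfix, add_zero, Units.val_mk0]

theorem algEquiv_pow_char_apply_eq_self [Finite F] {p : ℕ} [Fact p.Prime] [CharP F p]
    {A : GL (Fin 2) F} {e : ℕ} (hA : toPGL F A ^ p ^ e = 1) {K : Type*} [Field K] [Algebra F K]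
    {σ : K ≃ₐ[F] K} {x : K} (hx : x ∉ Set.range (algebraMap F K))
    (hσ : σ x = mobius (A : Matrix (Fin 2) (Fin 2) F) x) : (σ ^ p) x = x := by
  obtain ⟨l, N, hl, hN, hAN⟩ := exists_smul_one_add_of_toPGL_pow_eq_one hA
  rw [algEquiv_pow_apply_eq_mobius_pow (mobiusDen_ne_zero A.det_ne_zero hx) hσ, hAN,
    _root_.smul_pow, one_add_pow_char_of_mul_self_eq_zero p hN, mobius_smul (pow_ne_zero p hl),
    mobius_one]

theorem exists_algEquiv_root_eq_mobius {f : F[X]} [Fact (Irreducible f)] (hf : f.Monic)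
    (hdeg : 2 ≤ f.natDegree) {A : GL (Fin 2) F} (hA : pcirc (A : Matrix (Fin 2) (Fin 2) F) f = f) :
    ∃ σ : AdjoinRoot f ≃ₐ[F] AdjoinRoot f,
      σ (AdjoinRoot.root f) = mobius (A : Matrix (Fin 2) (Fin 2) F) (AdjoinRoot.root f) := by
  have hroot : aeval (AdjoinRoot.root f) f = 0 := by rw [AdjoinRoot.aeval_eq, AdjoinRoot.mk_self]
  have hα := notMem_range_algebraMap_of_aeval_eq_zero (Fact.out : Irreducible f) hdeg hroot
  exact AdjoinRoot.exists_algEquiv_root_eq <|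
    aeval_mobius_eq_zero hf hA (mobiusDen_ne_zero A.det_ne_zero hα) hroot

end PGL
end PGLAct

open PGLAct in
/-- If `G ≤ PGL₂(F_q)` has order `p^r` with `r ≥ 2` (`q` a power of the
prime `p`), then no monic irreducible polynomial of degree `≥ 2` is `G`-invariant. -/
theorem no_invariant_p_group {F : Type} [Field F] [Fintype F] (p : ℕ) (hp : p.Prime)
    (hq : ∃ s : ℕ, 0 < s ∧ Fintype.card F = p ^ s)
    (G : Subgroup (PGLAct.PGL2 F)) (r : ℕ) (hr : 2 ≤ r) (hG : Nat.card G = p ^ r) :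
    ¬ ∃ f : F[X], f.Monic ∧ Irreducible f ∧ 2 ≤ f.natDegree ∧
      ∀ A : GL (Fin 2) F, PGLAct.toPGL F A ∈ G → PGLAct.pcirc A.val f = f := by
  rintro ⟨f, hmonic, hirr, hdeg, hinv⟩
  obtain ⟨s, -, hqs⟩ := hq
  have := Fact.mk hp
  have := charP_of_card_eq_prime_pow hqs
  have := Fact.mk hirr
  have := (AdjoinRoot.powerBasis hirr.ne_zero).finite
  have := Module.finite_of_finite F (M := AdjoinRoot f)
  have hα := notMem_range_algebraMap_of_aeval_eq_zero hirr hdeg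
    (show aeval (AdjoinRoot.root f) f = 0 by rw [AdjoinRoot.aeval_eq, AdjoinRoot.mk_self])
  have hord : ∀ A, toPGL F A ∈ G → toPGL F A ^ p ^ r = 1 := fun A hA => by
    rw [← hG]
    exact congrArg Subtype.val (pow_card_eq_one' (x := (⟨_, hA⟩ : G)))
  choose A hA using fun g : G => toPGL_surjective g.1
  have hAG : ∀ g, toPGL F (A g) ∈ G := fun g => (hA g).symm ▸ g.2
  choose σ hσ using fun g : G => exists_algEquiv_root_eq_mobius hmonic hdeg (hinv _ (hAG g))
  have hσ_inj : Function.Injective σ := by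
    intro g h hgh
    have hmem : toPGL F (A g * (A h)⁻¹) ∈ G := by
      rw [map_mul, map_inv]
      exact mul_mem (hAG g) (inv_mem (hAG h))
    have := toPGL_eq_one_of_mobius_eq_self (hord _ hmem) hα
      (mobius_mul_inv_eq_self hα (by rw [← hσ, ← hσ, hgh]))
    rw [map_mul, map_inv, mul_inv_eq_one] at this
    exact Subtype.ext ((hA g).symm.trans (this.trans (hA h)))
  have hσ_pow : ∀ g, σ g ^ p = 1 := fun g => AlgEquiv.coe_toAlgHom_injective <|
    AdjoinRoot.algHom_ext (algEquiv_pow_char_apply_eq_self (hord _ (hAG g)) hα (hσ g))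
  have hcard := IsCyclic.card_le_of_injective_of_pow_eq_one hp.pos hσ_inj hσ_pow
  rw [hG] at hcard
  have := Nat.pow_le_pow_right hp.pos hr
  nlinarith [hp.two_le]
end
end

section
/- Let q be a prime power, r a non-negative integer, and A₁, A₂ ∈ GL₂(F_q) with [A₁] ≠ [A₂] in PGL₂(F_q). If f ∈ F_q[x] is an irreducible polynomial dividing both F_{A₁,r} and F_{A₂,r}, then f has degree at most 2. -/
open Polynomial

noncomputable section

/-! Writing `F_{A,r} = (b x - a) x^{q^r} + (d x - c)`, the combination
`(b₂ x - a₂) F_{A₁,r} - (b₁ x - a₁) F_{A₂,r}` eliminates `x^{q^r}` and leaves a polynomial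
of degree at most `2` divisible by `f`. Its three coefficients vanish only if `A₂` is a
scalar multiple of `A₁`, so for `[A₁] ≠ [A₂]` it is nonzero and bounds the degree of `f`. -/

namespace PGLAct

variable {F : Type} [Field F]

def eliminant (A B : Matrix (Fin 2) (Fin 2) F) : F[X] :=
  (C (B 0 1) * X - C (B 0 0)) * (C (A 1 1) * X - C (A 1 0))
    - (C (A 0 1) * X - C (A 0 0)) * (C (B 1 1) * X - C (B 1 0))

theorem FAr_eq [Fintype F] (A : Matrix (Fin 2) (Fin 2) F) (r : ℕ) :
    FAr A r = (C (A 0 1) * X - C (A 0 0)) * X ^ (Fintype.card F ^ r)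
      + (C (A 1 1) * X - C (A 1 0)) := by
  rw [FAr]
  ring

theorem eliminant_eq_sub_mul_FAr [Fintype F] (A B : Matrix (Fin 2) (Fin 2) F) (r : ℕ) :
    eliminant A B =
      (C (B 0 1) * X - C (B 0 0)) * FAr A r - (C (A 0 1) * X - C (A 0 0)) * FAr B r := by
  rw [eliminant, FAr_eq, FAr_eq]
  ring

theorem dvd_eliminant [Fintype F] {A B : Matrix (Fin 2) (Fin 2) F} {r : ℕ} {f : F[X]}
    (hA : f ∣ FAr A r) (hB : f ∣ FAr B r) : f ∣ eliminant A B := by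
  rw [eliminant_eq_sub_mul_FAr A B r]
  exact dvd_sub (hA.mul_left _) (hB.mul_left _)

theorem eliminant_eq_quadratic (A B : Matrix (Fin 2) (Fin 2) F) :
    eliminant A B = C (B 0 1 * A 1 1 - A 0 1 * B 1 1) * X ^ 2
      + C (A 0 1 * B 1 0 + A 0 0 * B 1 1 - B 0 1 * A 1 0 - B 0 0 * A 1 1) * X
      + C (B 0 0 * A 1 0 - A 0 0 * B 1 0) := by
  simp only [eliminant, map_sub, map_add, map_mul]
  ring

theorem natDegree_eliminant_le (A B : Matrix (Fin 2) (Fin 2) F) :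
    (eliminant A B).natDegree ≤ 2 := by
  rw [eliminant_eq_quadratic]
  exact natDegree_quadratic_le

theorem smul_eq_det_smul_of_eliminant_eq_zero {A B : Matrix (Fin 2) (Fin 2) F}
    (h : eliminant A B = 0) : (A 0 0 * B 1 1 - B 0 1 * A 1 0) • B = B.det • A := by
  rw [eliminant_eq_quadratic] at h
  have h2 := congrArg (coeff · 2) h
  have h1 := congrArg (coeff · 1) h
  have h0 := congrArg (coeff · 0) h
  simp only [coeff_add, coeff_C_mul, coeff_X_pow, coeff_X, coeff_C, coeff_zero, ↓reduceIte,
    Nat.reduceEqDiff, mul_one, mul_zero, add_zero, zero_add] at h2 h1 h0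
  ext i j
  fin_cases i <;> fin_cases j <;>
    simp only [Fin.zero_eta, Fin.mk_one, Matrix.smul_apply, smul_eq_mul, Matrix.det_fin_two]
  · linear_combination (-B 0 1) * h0
  · linear_combination B 0 1 * h1 + B 0 0 * h2
  · linear_combination (-B 1 1) * h0
  · linear_combination B 1 1 * h1 + B 1 0 * h2

theorem exists_smul_eq_of_eliminant_eq_zero {A B : Matrix (Fin 2) (Fin 2) F} (hA : A ≠ 0)
    (hB : B.det ≠ 0) (h : eliminant A B = 0) : ∃ μ : Fˣ, B = (μ : F) • A := by
  have hsmul := smul_eq_det_smul_of_eliminant_eq_zero h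
  have hc : A 0 0 * B 1 1 - B 0 1 * A 1 0 ≠ 0 := by
    intro hc
    rw [hc, zero_smul, eq_comm, smul_eq_zero] at hsmul
    exact hsmul.elim hB hA
  refine ⟨Units.mk0 _ (mul_ne_zero (inv_ne_zero hc) hB), ?_⟩
  rw [Units.val_mk0, mul_smul, ← hsmul, inv_smul_smul₀ hc]

theorem toPGL_eq_of_val_eq_smul {A B : GL (Fin 2) F} {μ : Fˣ} (h : B.val = (μ : F) • A.val) :
    toPGL F A = toPGL F B := by
  refine (QuotientGroup.mk'_eq_mk' _).mpr ⟨Units.map (Matrix.scalar (Fin 2)).toMonoidHom μ,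
    ⟨μ, rfl⟩, Units.ext ?_⟩
  change A.val * Matrix.scalar (Fin 2) (μ : F) = B.val
  rw [h, Matrix.scalar_apply, ← Matrix.smul_eq_mul_diagonal]

end PGLAct

theorem common_divisor_degree_le_two_general {F : Type} [Field F] [Fintype F] (r : ℕ)
    (A1 A2 : GL (Fin 2) F) (hne : PGLAct.toPGL F A1 ≠ PGLAct.toPGL F A2)
    (f : F[X])
    (h1 : f ∣ PGLAct.FAr A1.val r) (h2 : f ∣ PGLAct.FAr A2.val r) :
    f.natDegree ≤ 2 := by
  have hA1 : A1.val ≠ 0 := A1.ne_zero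
  have hA2 : A2.val.det ≠ 0 := (A2.isUnit.map Matrix.detMonoidHom).ne_zero
  have helim : PGLAct.eliminant A1.val A2.val ≠ 0 := fun h => by
    obtain ⟨μ, hμ⟩ := PGLAct.exists_smul_eq_of_eliminant_eq_zero hA1 hA2 h
    exact hne (PGLAct.toPGL_eq_of_val_eq_smul hμ)
  calc f.natDegree ≤ (PGLAct.eliminant A1.val A2.val).natDegree :=
        natDegree_le_of_dvd (PGLAct.dvd_eliminant h1 h2) helim
    _ ≤ 2 := PGLAct.natDegree_eliminant_le _ _

/-- If `[A₁] ≠ [A₂]` and the irreducible polynomial `f` divides both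
`F_{A₁,r}` and `F_{A₂,r}`, then `deg f ≤ 2`. -/
theorem common_divisor_degree_le_two {F : Type} [Field F] [Fintype F] (r : ℕ)
    (A1 A2 : GL (Fin 2) F) (hne : PGLAct.toPGL F A1 ≠ PGLAct.toPGL F A2)
    (f : F[X]) (hirr : Irreducible f)
    (h1 : f ∣ PGLAct.FAr A1.val r) (h2 : f ∣ PGLAct.FAr A2.val r) :
    f.natDegree ≤ 2 :=
  common_divisor_degree_le_two_general r A1 A2 hne f h1 h2
end
end

section
/- Let q be a prime power and G ≤ PGL₂(F_q) a non-cyclic subgroup of order at least 5. Then no monic irreducible polynomial f ∈ F_q[x] of degree at least 3 is G-invariant. -/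
open Polynomial

noncomputable section

/-!
Let `θ` be a root of `f` in `K = F[x]/(f)`. If `[A]` fixes `f`, then `(a θ + c) / (b θ + d)` is
again a root of `f`, so `A` determines the `F`-automorphism of `K` sending `θ` there; this is a
homomorphism from the preimage of `G` in `GL₂(F)` to `Gal(K/F)`. An `A` in its kernel gives the
relation `b θ² + (d - a) θ - c = 0`, which for `deg θ ≥ 3` forces `A` to be scalar. So `G` is a
quotient of a subgroup of `Gal(K/F)`, which is cyclic as `F` is finite.
-/

theorem isCyclic_of_surjective_of_ker_le {H G C : Type*} [Group H] [Group G] [Group C]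
    [IsCyclic C] (π : H →* G) (hπ : Function.Surjective π) (ψ : H →* C)
    (hker : ψ.ker ≤ π.ker) : IsCyclic G :=
  have : IsCyclic (H ⧸ ψ.ker) := isCyclic_of_injective _ (QuotientGroup.kerLift_injective ψ)
  isCyclic_of_surjective _ (QuotientGroup.lift_surjective_of_surjective _ π hπ hker)

namespace PGLAct

section Moebius

variable {F : Type} {K : Type*} [Field F] [Field K] [Algebra F K]

def moebiusNum (A : Matrix (Fin 2) (Fin 2) F) (x : K) : K :=
  algebraMap F K (A 0 0) * x + algebraMap F K (A 1 0)

def moebiusDen (A : Matrix (Fin 2) (Fin 2) F) (x : K) : K :=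
  algebraMap F K (A 0 1) * x + algebraMap F K (A 1 1)

/-- `x ↦ (a x + c) / (b x + d)` for `A = [[a,b],[c,d]]`: `A ∘ f` is `f` of this, homogenised. -/
def moebius (A : Matrix (Fin 2) (Fin 2) F) (x : K) : K :=
  moebiusNum A x / moebiusDen A x

lemma aeval_mcirc_s8 (A : Matrix (Fin 2) (Fin 2) F) (f : F[X]) (x : K) :
    aeval x (mcirc A f) = ∑ i ∈ Finset.range (f.natDegree + 1),
      algebraMap F K (f.coeff i) * moebiusNum A x ^ i * moebiusDen A x ^ (f.natDegree - i) := by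
  simp [mcirc, moebiusNum, moebiusDen]

lemma aeval_mcirc_eq_mul_aeval_moebius (A : Matrix (Fin 2) (Fin 2) F) (f : F[X]) {x : K}
    (hden : moebiusDen A x ≠ 0) :
    aeval x (mcirc A f) = moebiusDen A x ^ f.natDegree * aeval (moebius A x) f := by
  rw [aeval_mcirc_s8, aeval_eq_sum_range, Finset.mul_sum]
  refine Finset.sum_congr rfl fun i hi => ?_
  rw [Finset.mem_range] at hi
  rw [Algebra.smul_def, moebius, div_pow, pow_sub₀ _ hden (by omega)]
  field_simp

lemma moebiusDen_ne_zero_of_aeval_mcirc_eq_zero (A : GL (Fin 2) F) {f : F[X]} (hf : f ≠ 0)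
    {x : K} (hx : aeval x (mcirc A.val f) = 0) : moebiusDen A.val x ≠ 0 := by
  intro hden
  have hnum : moebiusNum A.val x = 0 := by
    rw [aeval_mcirc_s8, Finset.sum_eq_single_of_mem f.natDegree (Finset.self_mem_range_succ _)
      fun i hi hne => by
        rw [Finset.mem_range] at hi
        rw [hden, zero_pow (by omega), mul_zero]] at hx
    rw [Nat.sub_self, pow_zero, mul_one] at hx
    have hlc : algebraMap F K f.leadingCoeff ≠ 0 := by simpa using leadingCoeff_ne_zero.mpr hf
    exact (pow_eq_zero_iff'.mp ((mul_eq_zero.mp hx).resolve_left hlc)).1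
  have hdet : algebraMap F K A.val.det = 0 := by
    simp only [moebiusNum, moebiusDen] at hnum hden
    simp only [Matrix.det_fin_two, map_sub, map_mul]
    linear_combination algebraMap F K (A.val 0 0) * hden - algebraMap F K (A.val 0 1) * hnum
  exact A.isUnit.map Matrix.detMonoidHom |>.ne_zero ((map_eq_zero _).mp hdet)

lemma moebiusNum_mul (A B : Matrix (Fin 2) (Fin 2) F) (x : K) :
    moebiusNum (A * B) x =
      algebraMap F K (B 0 0) * moebiusNum A x + algebraMap F K (B 1 0) * moebiusDen A x := by
  simp only [moebiusNum, moebiusDen, Matrix.mul_apply, Fin.sum_univ_two, map_add, map_mul]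
  ring

lemma moebiusDen_mul (A B : Matrix (Fin 2) (Fin 2) F) (x : K) :
    moebiusDen (A * B) x =
      algebraMap F K (B 0 1) * moebiusNum A x + algebraMap F K (B 1 1) * moebiusDen A x := by
  simp only [moebiusNum, moebiusDen, Matrix.mul_apply, Fin.sum_univ_two, map_add, map_mul]
  ring

lemma moebius_div (B : Matrix (Fin 2) (Fin 2) F) (u : K) {v : K} (hv : v ≠ 0) :
    moebius B (u / v) = (algebraMap F K (B 0 0) * u + algebraMap F K (B 1 0) * v) /
      (algebraMap F K (B 0 1) * u + algebraMap F K (B 1 1) * v) := by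
  rw [moebius, moebiusNum, moebiusDen, mul_div_assoc', mul_div_assoc', div_add' _ _ _ hv,
    div_add' _ _ _ hv, div_div_div_cancel_right₀ hv]

lemma moebius_mul (A B : Matrix (Fin 2) (Fin 2) F) {x : K} (hden : moebiusDen A x ≠ 0) :
    moebius (A * B) x = moebius B (moebius A x) := by
  rw [moebius, moebiusNum_mul, moebiusDen_mul, ← moebius_div B _ hden]
  rfl

lemma map_moebius {L Φ : Type*} [Field L] [Algebra F L] [FunLike Φ K L] [AlgHomClass Φ F K L]
    (φ : Φ) (A : Matrix (Fin 2) (Fin 2) F) (x : K) : φ (moebius A x) = moebius A (φ x) := by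
  simp [moebius, moebiusNum, moebiusDen, map_div₀, AlgHomClass.commutes]

end Moebius

lemma mem_scalarSub_of_eq {F : Type} [Field F] (A : GL (Fin 2) F) (hb : A.val 0 1 = 0)
    (hc : A.val 1 0 = 0) (hd : A.val 1 1 = A.val 0 0) : A ∈ scalarSub F := by
  have ha : A.val 0 0 ≠ 0 := by
    have := A.isUnit.map Matrix.detMonoidHom |>.ne_zero
    simp_all [Matrix.det_fin_two]
  refine ⟨Units.mk0 _ ha, Units.ext ?_⟩
  ext i j
  fin_cases i <;> fin_cases j <;> simp [hb, hc, hd]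

lemma dvd_mcirc_of_pcirc_eq {F : Type} [Field F] {A : Matrix (Fin 2) (Fin 2) F} {f : F[X]}
    (h : pcirc A f = f) : f ∣ mcirc A f := by
  by_cases h0 : mcirc A f = 0
  · exact h0 ▸ dvd_zero f
  refine ⟨C (mcirc A f).leadingCoeff, ?_⟩
  calc mcirc A f = C (mcirc A f).leadingCoeff⁻¹ * mcirc A f * C (mcirc A f).leadingCoeff := by
        rw [mul_right_comm, ← C_mul, inv_mul_cancel₀ (leadingCoeff_ne_zero.mpr h0), C_1, one_mul]
    _ = f * C (mcirc A f).leadingCoeff := congrArg (· * _) h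

section Invariant

variable {F : Type} {K : Type*} [Field F] [Field K] [Algebra F K] {f : F[X]}

lemma aeval_mcirc_eq_zero {A : Matrix (Fin 2) (Fin 2) F} (h : pcirc A f = f) {x : K}
    (hx : aeval x f = 0) : aeval x (mcirc A f) = 0 := by
  obtain ⟨g, hg⟩ := dvd_mcirc_of_pcirc_eq h
  rw [hg, map_mul, hx, zero_mul]

lemma moebiusDen_ne_zero_of_pcirc_eq (A : GL (Fin 2) F) (hf : f ≠ 0) (h : pcirc A.val f = f)
    {x : K} (hx : aeval x f = 0) : moebiusDen A.val x ≠ 0 :=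
  moebiusDen_ne_zero_of_aeval_mcirc_eq_zero A hf (aeval_mcirc_eq_zero h hx)

lemma aeval_moebius_eq_zero (A : GL (Fin 2) F) (hf : f ≠ 0) (h : pcirc A.val f = f) {x : K}
    (hx : aeval x f = 0) : aeval (moebius A.val x) f = 0 := by
  have hden := moebiusDen_ne_zero_of_pcirc_eq A hf h hx
  have hmx := aeval_mcirc_eq_zero h hx
  rw [aeval_mcirc_eq_mul_aeval_moebius _ _ hden] at hmx
  exact (mul_eq_zero.mp hmx).resolve_left (pow_ne_zero _ hden)

end Invariant

lemma mem_scalarSub_of_moebius_eq_self {F : Type} {K : Type*} [Field F] [Field K] [Algebra F K]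
    (A : GL (Fin 2) F) {x : K} (hx : 2 < (minpoly F x).natDegree)
    (hden : moebiusDen A.val x ≠ 0) (hfix : moebius A.val x = x) : A ∈ scalarSub F := by
  set p : F[X] := C (A.val 0 1) * X ^ 2 + C (A.val 1 1 - A.val 0 0) * X - C (A.val 1 0) with hp
  have hpx : aeval x p = 0 := by
    have := (div_eq_iff hden).mp hfix
    simp only [moebiusNum, moebiusDen] at this
    simp only [hp, map_sub, map_add, map_mul, map_pow, aeval_C, aeval_X]
    linear_combination -this
  have hp0 : p = 0 := by
    by_contra hp0
    have hle := natDegree_le_natDegree (minpoly.degree_le_of_ne_zero F x hp0 hpx)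
    have : p.natDegree ≤ 2 := by rw [hp]; compute_degree
    omega
  have hcoeff (n : ℕ) : p.coeff n = 0 := by rw [hp0, coeff_zero]
  refine mem_scalarSub_of_eq A ?_ ?_ ?_
  · simpa [hp] using hcoeff 2
  · simpa [hp] using hcoeff 0
  · simpa [hp, sub_eq_zero] using hcoeff 1

section AdjoinRoot

open AdjoinRoot

variable {F : Type} [Field F] (f : F[X]) [Fact (Irreducible f)]

instance : FiniteDimensional F (AdjoinRoot f) :=
  (powerBasis (Fact.out : Irreducible f).ne_zero).finite

def rootAut {y : AdjoinRoot f} (hy : aeval y f = 0) : Gal(AdjoinRoot f/F) :=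
  AlgEquiv.ofBijective (liftAlgHom f (Algebra.ofId F _) y hy)
    (Algebra.IsAlgebraic.algHom_bijective _)

@[simp]
lemma rootAut_root {y : AdjoinRoot f} (hy : aeval y f = 0) : rootAut f hy (root f) = y :=
  liftAlgHom_root f _ y hy

lemma algEquiv_ext_root {σ τ : Gal(AdjoinRoot f/F)} (h : σ (root f) = τ (root f)) : σ = τ :=
  AlgEquiv.coe_toAlgHom_injective (algHom_ext h)

variable {S : Subgroup (GL (Fin 2) F)}

lemma aeval_moebius_root (hS : ∀ A ∈ S, pcirc A.val f = f) (A : S) :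
    aeval (moebius A.1.val (root f)) f = 0 :=
  aeval_moebius_eq_zero A.1 (Fact.out : Irreducible f).ne_zero (hS A A.2) (by simp)

lemma moebiusDen_root_ne_zero (hS : ∀ A ∈ S, pcirc A.val f = f) (A : S) :
    moebiusDen A.1.val (root f) ≠ 0 :=
  moebiusDen_ne_zero_of_pcirc_eq A.1 (Fact.out : Irreducible f).ne_zero (hS A A.2) (by simp)

def moebiusAut (hS : ∀ A ∈ S, pcirc A.val f = f) : S →* Gal(AdjoinRoot f/F) :=
  MonoidHom.mk' (fun A => rootAut f (aeval_moebius_root f hS A)) fun A B =>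
    algEquiv_ext_root f <| by
      simp only [AlgEquiv.mul_apply, rootAut_root, Subgroup.coe_mul, Units.val_mul]
      rw [moebius_mul _ _ (moebiusDen_root_ne_zero f hS A), map_moebius, rootAut_root]

lemma mem_scalarSub_of_moebiusAut_eq_one (hS : ∀ A ∈ S, pcirc A.val f = f)
    (hdeg : 2 < f.natDegree) {A : S} (h : moebiusAut f hS A = 1) : A.1 ∈ scalarSub F := by
  refine mem_scalarSub_of_moebius_eq_self A.1 ?_ (moebiusDen_root_ne_zero f hS A) ?_
  · rwa [minpoly_root (Fact.out : Irreducible f).ne_zero, natDegree_mul_C]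
    exact inv_ne_zero (leadingCoeff_ne_zero.mpr (Fact.out : Irreducible f).ne_zero)
  · rw [← rootAut_root f (aeval_moebius_root f hS A)]
    exact congrArg (· (root f)) h

end AdjoinRoot

end PGLAct

theorem no_invariant_noncyclic_ge_five_general {F : Type} [Field F] [Fintype F]
    (G : Subgroup (PGLAct.PGL2 F)) (hnc : ¬ IsCyclic G) :
    ∀ f : F[X], f.Monic → Irreducible f → 3 ≤ f.natDegree →
      ¬ (∀ A : GL (Fin 2) F, PGLAct.toPGL F A ∈ G → PGLAct.pcirc A.val f = f) := by
  intro f _ hirr hdeg hinv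
  have : Fact (Irreducible f) := ⟨hirr⟩
  have : Finite (AdjoinRoot f) := Module.finite_of_finite F
  refine hnc (isCyclic_of_surjective_of_ker_le ((PGLAct.toPGL F).subgroupComap G)
    ((PGLAct.toPGL F).subgroupComap_surjective_of_surjective G (QuotientGroup.mk'_surjective _))
    (PGLAct.moebiusAut f (S := G.comap (PGLAct.toPGL F)) hinv) fun A hA => ?_)
  exact Subtype.ext ((QuotientGroup.eq_one_iff _).mpr
    (PGLAct.mem_scalarSub_of_moebiusAut_eq_one f hinv hdeg hA))

/-- If `G ≤ PGL₂(F_q)` is non-cyclic of order at least `5`, then no monic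
irreducible polynomial of degree at least `3` is `G`-invariant. -/
theorem no_invariant_noncyclic_ge_five {F : Type} [Field F] [Fintype F]
    (G : Subgroup (PGLAct.PGL2 F)) (hnc : ¬ IsCyclic G) (hcard : 5 ≤ Nat.card G) :
    ∀ f : F[X], f.Monic → Irreducible f → 3 ≤ f.natDegree →
      ¬ (∀ A : GL (Fin 2) F, PGLAct.toPGL F A ∈ G → PGLAct.pcirc A.val f = f) :=
  no_invariant_noncyclic_ge_five_general G hnc
end
end

section
/- Let q be a prime power, let a ∈ F_q∖{0,1} have multiplicative order k, and let m ≥ 1 with km > 2. For a monic irreducible polynomial f ∈ F_q[x] of degree km, one has f(ax) = f(x) (equivalently, [A(a)]∘f = f where A(a) = [[a,0],[0,1]]) if and only if f(x) = g(x^k) for some polynomial g ∈ F_q[x] of degree m. -/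
open Polynomial

noncomputable section

private lemma coeff_comp_C_mul_X_aux {F : Type} [Field F] (f : F[X]) (a : F) (n : ℕ) :
    (f.comp (C a * X)).coeff n = f.coeff n * a ^ n := by
  rw [comp_eq_sum_left, Polynomial.sum_def, finset_sum_coeff]
  simp only [mul_pow, ← C_pow, ← mul_assoc, ← C_mul, coeff_C_mul, coeff_X_pow]
  rw [Finset.sum_eq_single n]
  · simp [mul_comm]
  · intro b _ hb; simp [if_neg (Ne.symm hb)]
  · intro h; simp [Polynomial.notMem_support_iff.mp h]

/-- For `a ∈ F_q∖{0,1}` of multiplicative order `k` and a monic irreducible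
`f` of degree `km > 2`: `f(ax) = f(x)` iff `f(x) = g(x^k)` for some `g` of degree `m`. -/
theorem invariant_type_one_iff {F : Type} [Field F] [Fintype F]
    (a : F) (ha0 : a ≠ 0) (ha1 : a ≠ 1) (k : ℕ) (hk : orderOf a = k)
    (m : ℕ) (hm : 1 ≤ m) (hkm : 2 < k * m)
    (f : F[X]) (hf : f.Monic) (hirr : Irreducible f) (hdeg : f.natDegree = k * m) :
    f.comp (C a * X) = f ↔ ∃ g : F[X], g.natDegree = m ∧ f = g.comp (X ^ k) := by
  have hk0 : 0 < k := by
    rw [← hk]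
    simpa [← orderOf_units] using orderOf_pos (Units.mk0 a ha0)
  have hak : a ^ k = 1 := by rw [← hk]; exact pow_orderOf_eq_one a
  constructor
  · intro h
    have hcoeff : ∀ n, f.coeff n * a ^ n = f.coeff n := by
      intro n; rw [← coeff_comp_C_mul_X_aux, h]
    have hzero : ∀ n, ¬ k ∣ n → f.coeff n = 0 := by
      intro n hn
      have han : a ^ n ≠ 1 := by
        intro he
        exact hn (hk ▸ orderOf_dvd_of_pow_eq_one he)
      have := hcoeff n
      have h2 : f.coeff n * (a ^ n - 1) = 0 := by ring_nf; linear_combination this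
      rcases mul_eq_zero.mp h2 with h3 | h3
      · exact h3
      · exact absurd (by linear_combination h3) han
    set g : F[X] := ∑ j ∈ Finset.range (m + 1), Polynomial.monomial j (f.coeff (k * j))
      with hgdef
    have hgc : ∀ j, g.coeff j = if j ≤ m then f.coeff (k * j) else 0 := by
      intro j
      rw [hgdef, finset_sum_coeff]
      simp only [coeff_monomial]
      rw [Finset.sum_ite_eq' (Finset.range (m + 1)) j]
      simp [Nat.lt_succ_iff]
    have hcm : f.coeff (k * m) = 1 := by
      rw [← hdeg]; exact hf
    have hfexp : Polynomial.expand F k g = f := by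
      ext n
      rw [coeff_expand hk0]
      by_cases hdvd : k ∣ n
      · rw [if_pos hdvd, hgc]
        obtain ⟨j, rfl⟩ := hdvd
        rw [Nat.mul_div_cancel_left j hk0]
        by_cases hj : j ≤ m
        · rw [if_pos hj]
        · rw [if_neg hj]
          refine (coeff_eq_zero_of_natDegree_lt ?_).symm
          rw [hdeg]
          exact (Nat.mul_lt_mul_left hk0).mpr (lt_of_not_ge hj)
      · rw [if_neg hdvd, (hzero n hdvd)]
    refine ⟨g, ?_, ?_⟩
    · apply le_antisymm
      · rw [Polynomial.natDegree_le_iff_coeff_eq_zero]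
        intro j hj
        rw [hgc, if_neg (not_le.mpr hj)]
      · apply le_natDegree_of_ne_zero
        rw [hgc, if_pos le_rfl, hcm]
        exact one_ne_zero
    · rw [← hfexp, Polynomial.expand_eq_comp_X_pow]
  · rintro ⟨g, hgdeg, hfg⟩
    rw [hfg, Polynomial.comp_assoc, pow_comp, X_comp, mul_pow, ← C_pow, hak, map_one,
      one_mul]
end
end

section
/- Let q be a power of a prime p. For any f ∈ F_q[x], one has f(x+1) = f(x) if and only if f(x) = g(x^p − x) for some g ∈ F_q[x]. In particular, for m ≥ 1 with pm > 2, a monic irreducible polynomial f ∈ F_q[x] of degree pm satisfies [E]∘f = f (where E = [[1,0],[1,1]], equivalently f(x+1) = f(x)) if and only if f(x) = g(x^p − x) for some polynomial g ∈ F_q[x] of degree m. -/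
open Polynomial

noncomputable section

/-!
Since `(X + 1) ^ p = X ^ p + 1` in characteristic `p`, the shift `X ↦ X + 1` fixes
`φ = X ^ p - X`, hence every `g.comp φ`. Conversely, if `f` is shift-invariant, then so are
the quotient and the remainder of `f` by the monic `φ`, by uniqueness of division. The remainder
has degree `< p` and takes the same value at `0, 1, …, p - 1`, so it is a constant; the
quotient has smaller degree, and induction writes it as `g.comp φ`.
-/

namespace Polynomial

section CommRing

variable {R : Type*} [CommRing R] {p : ℕ}

theorem natDegree_X_pow_sub_X [Nontrivial R] (hp : 1 < p) : (X ^ p - X : R[X]).natDegree = p := by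
  rw [natDegree_sub_eq_left_of_natDegree_lt] <;> simp [hp]

theorem monic_X_pow_sub_X (hp : 1 < p) : (X ^ p - X : R[X]).Monic :=
  monic_X_pow_sub (degree_X_le.trans_lt (mod_cast hp))

theorem taylor_X_pow_sub_X [Fact p.Prime] [CharP R p] (a : R) (ha : a ^ p = a) :
    taylor a (X ^ p - X : R[X]) = X ^ p - X := by
  rw [map_sub, taylor_X_pow, taylor_X, add_pow_char, ← C_pow, ha]
  ring

theorem taylor_divByMonic_modByMonic {a : R} {f g : R[X]} (hg : g.Monic)
    (hga : taylor a g = g) (hfa : taylor a f = f) :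
    taylor a (f /ₘ g) = f /ₘ g ∧ taylor a (f %ₘ g) = f %ₘ g := by
  nontriviality R
  have hdiv : taylor a (f %ₘ g) + g * taylor a (f /ₘ g) = f := by
    conv_rhs => rw [← hfa, ← modByMonic_add_div f g]
    rw [map_add, taylor_mul, hga]
  have hdeg : (taylor a (f %ₘ g)).degree < g.degree := by
    rw [degree_taylor]
    exact degree_modByMonic_lt f hg
  obtain ⟨hq, hr⟩ := div_modByMonic_unique _ _ hg ⟨hdiv, hdeg⟩
  exact ⟨hq.symm, hr.symm⟩

theorem eval_natCast_eq_eval_zero_of_taylor_one_eq_self {f : R[X]} (hf : taylor 1 f = f)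
    (n : ℕ) : f.eval (n : R) = f.eval 0 := by
  induction n with
  | zero => simp
  | succ n ih => rw [Nat.cast_succ, ← taylor_eval, hf, ih]

theorem eq_C_of_taylor_one_eq_self [IsDomain R] [CharP R p] {f : R[X]} (hf : taylor 1 f = f)
    (hdeg : f.natDegree < p) : f = C (f.eval 0) := by
  refine eq_of_natDegree_lt_card_of_eval_eq f _ (f := fun i : Fin p ↦ ((i : ℕ) : R))
    (fun i j hij ↦ Fin.ext (CharP.natCast_injOn_Iio R p i.2 j.2 hij)) (fun i ↦ ?_) (by simpa)
  rw [eval_C, eval_natCast_eq_eval_zero_of_taylor_one_eq_self hf]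

theorem natDegree_comp_X_pow_sub_X [IsDomain R] (hp : 1 < p) (g : R[X]) :
    (g.comp (X ^ p - X)).natDegree = g.natDegree * p := by
  rw [natDegree_comp, natDegree_X_pow_sub_X hp]

variable [IsDomain R] [Fact p.Prime] [CharP R p]

theorem exists_eq_comp_X_pow_sub_X_of_taylor_one_eq_self {f : R[X]} (hf : taylor 1 f = f) :
    ∃ g : R[X], f = g.comp (X ^ p - X) := by
  have hp : 1 < p := Fact.out (p := p.Prime) |>.one_lt
  induction hn : f.natDegree using Nat.strong_induction_on generalizing f with
  | _ n ih =>
    rcases lt_or_ge n p with hlt | hge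
    · exact ⟨C (f.eval 0), by rw [C_comp]; exact eq_C_of_taylor_one_eq_self hf (hn ▸ hlt)⟩
    have hφ := monic_X_pow_sub_X (R := R) hp
    obtain ⟨hq, hr⟩ := taylor_divByMonic_modByMonic hφ (taylor_X_pow_sub_X 1 (one_pow p)) hf
    have hqdeg : (f /ₘ (X ^ p - X)).natDegree < n := by
      rw [natDegree_divByMonic f hφ, natDegree_X_pow_sub_X hp]
      omega
    have hrdeg : (f %ₘ (X ^ p - X)).natDegree < p := by
      have hφ1 : (X ^ p - X : R[X]) ≠ 1 :=
        ne_of_apply_ne natDegree (by rw [natDegree_X_pow_sub_X hp, natDegree_one]; omega)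
      simpa [natDegree_X_pow_sub_X hp] using natDegree_modByMonic_lt f hφ hφ1
    obtain ⟨g, hg⟩ := ih _ hqdeg hq rfl
    refine ⟨C ((f %ₘ (X ^ p - X)).eval 0) + X * g, ?_⟩
    rw [add_comp, mul_comp, C_comp, X_comp, ← hg, ← eq_C_of_taylor_one_eq_self hr hrdeg,
      modByMonic_add_div]

theorem comp_X_add_one_eq_self_iff_exists_eq_comp_X_pow_sub_X (f : R[X]) :
    f.comp (X + 1) = f ↔ ∃ g : R[X], f = g.comp (X ^ p - X) := by
  rw [← C_1, ← taylor_apply]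
  refine ⟨exists_eq_comp_X_pow_sub_X_of_taylor_one_eq_self, ?_⟩
  rintro ⟨g, rfl⟩
  rw [taylor_apply, comp_assoc, ← taylor_apply, taylor_X_pow_sub_X 1 (one_pow p)]

end CommRing

end Polynomial

theorem invariant_type_two_iff_general {F : Type} [Field F]
    (p : ℕ) (hp : p.Prime) [CharP F p] :
    (∀ f : F[X], f.comp (X + 1) = f ↔ ∃ g : F[X], f = g.comp (X ^ p - X)) ∧
    (∀ m : ℕ, 1 ≤ m → 2 < p * m → ∀ f : F[X], f.Monic → Irreducible f →
      f.natDegree = p * m →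
      (f.comp (X + 1) = f ↔ ∃ g : F[X], g.natDegree = m ∧ f = g.comp (X ^ p - X))) := by
  have := Fact.mk hp
  refine ⟨comp_X_add_one_eq_self_iff_exists_eq_comp_X_pow_sub_X, fun m _ _ f _ _ hdeg ↦ ?_⟩
  rw [comp_X_add_one_eq_self_iff_exists_eq_comp_X_pow_sub_X]
  refine exists_congr fun g ↦ ⟨fun hg ↦ ⟨?_, hg⟩, And.right⟩
  rw [hg, natDegree_comp_X_pow_sub_X hp.one_lt, mul_comm p] at hdeg
  exact Nat.eq_of_mul_eq_mul_right hp.pos hdeg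

/-- For `q` a power of the prime `p`: `f(x+1) = f(x)` iff `f = g(x^p - x)`;
in particular a monic irreducible of degree `pm > 2` satisfies `f(x+1) = f(x)` iff
`f = g(x^p - x)` for some `g` of degree `m`. -/
theorem invariant_type_two_iff {F : Type} [Field F] [Fintype F]
    (p : ℕ) (hp : p.Prime) [CharP F p] :
    (∀ f : F[X], f.comp (X + 1) = f ↔ ∃ g : F[X], f = g.comp (X ^ p - X)) ∧
    (∀ m : ℕ, 1 ≤ m → 2 < p * m → ∀ f : F[X], f.Monic → Irreducible f →
      f.natDegree = p * m →
      (f.comp (X + 1) = f ↔ ∃ g : F[X], g.natDegree = m ∧ f = g.comp (X ^ p - X))) :=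
  invariant_type_two_iff_general p hp
end
end

section
/- Let q be an odd prime power, let b ∈ F_q* be a non-square, and let m ≥ 2. A monic irreducible polynomial f ∈ F_q[x] of degree 2m satisfies [C(b)]∘f = f, where C(b) = [[0,1],[b,0]] (equivalently, x^{2m}·f(b/x) = b^m·f(x)), if and only if there exists a polynomial g = Σ_{i=0}^m g_i x^i ∈ F_q[x] of degree m such that f(x) = Σ_{i=0}^m g_i (x²+b)^i x^{m−i} (i.e., f(x) = x^m·g(x + b/x)). -/
open Polynomial

noncomputable section

section InvariantAux

open Polynomial Finset

variable {F : Type} [Field F]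

private lemma reflect_sum' {ι : Type} (N : ℕ) (s : Finset ι) (p : ι → F[X]) :
    reflect N (∑ i ∈ s, p i) = ∑ i ∈ s, reflect N (p i) := by
  ext k
  simp [coeff_reflect, finset_sum_coeff]

private lemma reflect_sub' (N : ℕ) (p q : F[X]) :
    reflect N (p - q) = reflect N p - reflect N q := by
  ext k
  simp [coeff_reflect]

private lemma comp_sum' {ι : Type} (s : Finset ι) (p : ι → F[X]) (q : F[X]) :
    (∑ i ∈ s, p i).comp q = ∑ i ∈ s, (p i).comp q := by
  simp only [Polynomial.comp, eval₂_finset_sum]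

private lemma reflect_pow_aux (b : F) (i : ℕ) :
    reflect (2 * i) ((C b * X ^ 2 + 1) ^ i) = ((X : F[X]) ^ 2 + C b) ^ i := by
  induction i with
  | zero =>
    rw [pow_zero, pow_zero]
    ext k
    cases k with
    | zero => simp [coeff_reflect]
    | succ k => simp [coeff_reflect, revAt_eq_self_of_lt (Nat.succ_pos k)]
  | succ n ih =>
    have h1 : ((C b * X ^ 2 + 1 : F[X])).natDegree ≤ 2 :=
      le_trans (natDegree_add_le _ _) (by
        simp only [natDegree_one, max_le_iff]
        exact ⟨le_trans (natDegree_C_mul_le _ _) (by simp), by norm_num⟩)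
    have h2 : (((C b * X ^ 2 + 1 : F[X])) ^ n).natDegree ≤ 2 * n :=
      le_trans (natDegree_pow_le) (by nlinarith [h1])
    have key : reflect (2 + 2 * n) ((C b * X ^ 2 + 1) * (C b * X ^ 2 + 1) ^ n)
        = reflect 2 (C b * X ^ 2 + 1) * reflect (2 * n) ((C b * X ^ 2 + 1) ^ n) :=
      reflect_mul _ _ h1 h2
    have h3 : reflect 2 ((C b * X ^ 2 + 1 : F[X])) = X ^ 2 + C b := by
      have e0 : (C b * X ^ 2 + 1 : F[X]) = C b * X ^ 2 + C 1 * X ^ 0 := by simp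
      rw [e0, reflect_add, reflect_C_mul_X_pow, reflect_C_mul_X_pow,
        revAt_le (le_refl 2), revAt_le (Nat.zero_le 2)]
      simp [add_comm]
    rw [show 2 * (n + 1) = 2 + 2 * n by ring, pow_succ']
    rw [key, h3, ih, ← pow_succ']

private lemma reflect_basis (b : F) (m i : ℕ) (him : i ≤ m) :
    reflect (2 * m) (((((X : F[X]) ^ 2 + C b) ^ i) * X ^ (m - i)).comp (C b * X))
      = C (b ^ m) * (((X : F[X]) ^ 2 + C b) ^ i * X ^ (m - i)) := by
  obtain ⟨k, rfl⟩ : ∃ k, m = i + k := ⟨m - i, by omega⟩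
  have hmi : i + k - i = k := by omega
  rw [hmi]
  have hcomp : ((((X : F[X]) ^ 2 + C b) ^ i) * X ^ k).comp (C b * X)
      = C (b ^ (i + k)) * ((C b * X ^ 2 + 1) ^ i * X ^ k) := by
    simp only [mul_comp, pow_comp, add_comp, X_comp, C_comp]
    have e1 : ((C b * X : F[X])) ^ 2 + C b = C b * (C b * X ^ 2 + 1) := by ring
    rw [e1, mul_pow, mul_pow, ← C_pow, ← C_pow, pow_add, C_mul]
    ring
  rw [hcomp, reflect_C_mul]
  congr 1
  have h1 : (((C b * X ^ 2 + 1 : F[X])) ^ i).natDegree ≤ 2 * i := by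
    refine le_trans natDegree_pow_le ?_
    have : ((C b * X ^ 2 + 1 : F[X])).natDegree ≤ 2 :=
      le_trans (natDegree_add_le _ _) (by
        simp only [natDegree_one, max_le_iff]
        exact ⟨le_trans (natDegree_C_mul_le _ _) (by simp), by norm_num⟩)
    nlinarith
  have h2 : ((X : F[X]) ^ k).natDegree ≤ 2 * k := by
    simp only [natDegree_X_pow]; omega
  rw [show 2 * (i + k) = 2 * i + 2 * k by ring, reflect_mul _ _ h1 h2,
    reflect_pow_aux, reflect_monomial, revAt_le (by omega : k ≤ 2 * k),
    show 2 * k - k = k by omega]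

private lemma sum_eq_reflect (b : F) (N : ℕ) (p : F[X]) (hp : p.natDegree ≤ N) :
    ∑ i ∈ Finset.range (N + 1), C (p.coeff i * b ^ i) * X ^ (N - i)
      = reflect N (p.comp (C b * X)) := by
  conv_rhs => rw [p.as_sum_range' (N + 1) (Nat.lt_succ_of_le hp)]
  rw [comp_sum', reflect_sum']
  refine Finset.sum_congr rfl fun i hi => ?_
  have hiN : i ≤ N := by
    have := Finset.mem_range.mp hi; omega
  rw [monomial_comp, mul_pow, ← C_pow, show C (p.coeff i) * (C (b ^ i) * X ^ i)
      = C (p.coeff i * b ^ i) * X ^ i by rw [C_mul]; ring,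
    reflect_C_mul_X_pow, revAt_le hiN]

private lemma exists_g_aux (b : F) (hb0 : b ≠ 0) :
    ∀ m : ℕ, ∀ f : F[X], f.natDegree ≤ 2 * m →
      reflect (2 * m) (f.comp (C b * X)) = C (b ^ m) * f →
      ∃ g : F[X], g.natDegree ≤ m ∧
        f = ∑ i ∈ Finset.range (m + 1), C (g.coeff i) * (X ^ 2 + C b) ^ i * X ^ (m - i) := by
  intro m
  induction m with
  | zero =>
    intro f hdeg _
    refine ⟨C (f.coeff 0), by simp, ?_⟩
    conv_lhs => rw [eq_C_of_natDegree_le_zero (by omega : f.natDegree ≤ 0)]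
    simp
  | succ n ih =>
    intro f hdeg hrefl
    set c := f.coeff (2 * (n + 1)) with hc
    set h : F[X] := ((X : F[X]) ^ 2 + C b) ^ (n + 1) with hhdef
    have hXbmonic : ((X : F[X]) ^ 2 + C b).Monic := monic_X_pow_add_C b two_ne_zero
    have hmonic : h.Monic := hXbmonic.pow _
    have hdegh : h.natDegree = 2 * (n + 1) := by
      rw [hhdef, hXbmonic.natDegree_pow, natDegree_X_pow_add_C]; ring
    have hhtop : h.coeff (2 * (n + 1)) = 1 := by
      have := hmonic.coeff_natDegree; rwa [hdegh] at this
    have hh0 : h.coeff 0 = b ^ (n + 1) := by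
      rw [coeff_zero_eq_eval_zero, hhdef]; simp
    have hRh : reflect (2 * (n + 1)) (h.comp (C b * X)) = C (b ^ (n + 1)) * h := by
      have := reflect_basis b (n + 1) (n + 1) le_rfl
      rw [Nat.sub_self, pow_zero, mul_one] at this
      rw [hhdef]
      exact this
    have hf0 : f.coeff 0 = b ^ (n + 1) * c := by
      have hco := congrArg (fun p => coeff p (2 * (n + 1))) hrefl
      simp only [coeff_reflect, revAt_le (le_refl (2 * (n + 1))), Nat.sub_self,
        coeff_C_mul] at hco
      rwa [coeff_zero_eq_eval_zero, eval_comp, eval_mul, eval_C, eval_X, mul_zero,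
        ← coeff_zero_eq_eval_zero] at hco
    set f' : F[X] := f - C c * h with hf'def
    have hf'0 : f'.coeff 0 = 0 := by
      rw [hf'def, coeff_sub, coeff_C_mul, hh0, hf0]; ring
    have hf'top : f'.coeff (2 * (n + 1)) = 0 := by
      rw [hf'def, coeff_sub, coeff_C_mul, hhtop, ← hc]; ring
    have hdegCch : (C c * h).natDegree ≤ 2 * (n + 1) :=
      le_trans (natDegree_C_mul_le _ _) (le_of_eq hdegh)
    have hdeg' : f'.natDegree ≤ 2 * n + 1 := by
      rw [natDegree_le_iff_coeff_eq_zero]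
      intro N hN
      rcases eq_or_lt_of_le (by omega : 2 * (n + 1) ≤ N) with hNe | hNl
      · rw [← hNe]; exact hf'top
      · rw [hf'def, coeff_sub, coeff_eq_zero_of_natDegree_lt (lt_of_le_of_lt hdeg hNl),
          coeff_eq_zero_of_natDegree_lt (lt_of_le_of_lt hdegCch hNl), sub_zero]
    obtain ⟨f'', hf''⟩ := X_dvd_iff.mpr hf'0
    have hRf' : reflect (2 * (n + 1)) (f'.comp (C b * X)) = C (b ^ (n + 1)) * f' := by
      have e : f'.comp (C b * X) = f.comp (C b * X) - C c * (h.comp (C b * X)) := by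
        rw [hf'def, sub_comp, mul_comp, C_comp]
      rw [e, reflect_sub', reflect_C_mul, hrefl, hRh, hf'def]
      ring
    by_cases hf''0 : f'' = 0
    · -- then f = C c * h
      have hfeq : f = C c * h := by
        have : f' = 0 := by rw [hf'', hf''0, mul_zero]
        rw [hf'def] at this
        linear_combination (norm := ring_nf) this
      obtain ⟨g'', hg''deg, hg''repr⟩ := ih 0 (by simp) (by simp [reflect])
      refine ⟨C c * X ^ (n + 1), le_trans (natDegree_C_mul_le _ _) (by simp), ?_⟩
      rw [Finset.sum_range_succ]
      have hz : ∀ i ∈ Finset.range (n + 1),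
          C ((C c * X ^ (n + 1)).coeff i) * (X ^ 2 + C b) ^ i * X ^ (n + 1 - i) = 0 := by
        intro i hi
        have : i < n + 1 := Finset.mem_range.mp hi
        rw [coeff_C_mul, coeff_X_pow, if_neg (by omega)]
        simp
      rw [Finset.sum_eq_zero hz, zero_add, coeff_C_mul, coeff_X_pow, if_pos rfl,
        Nat.sub_self, pow_zero, mul_one, mul_one, hfeq, hhdef]
    · have hdeg'' : f''.natDegree ≤ 2 * n := by
        have : f'.natDegree = 1 + f''.natDegree := by
          rw [hf'', natDegree_mul X_ne_zero hf''0, natDegree_X]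
        omega
      have hRf'' : reflect (2 * n) (f''.comp (C b * X)) = C (b ^ n) * f'' := by
        have hd1 : ((C b * X : F[X])).natDegree ≤ 1 :=
          le_trans (natDegree_C_mul_le _ _) (le_of_eq natDegree_X)
        have hd2 : (f''.comp (C b * X)).natDegree ≤ 2 * n :=
          le_trans natDegree_comp_le (by
            calc f''.natDegree * (C b * X).natDegree ≤ 2 * n * 1 :=
              Nat.mul_le_mul hdeg'' hd1
            _ = 2 * n := by ring)
        have hd2' : (f''.comp (C b * X)).natDegree ≤ 2 * n + 1 := by omega
        have e1 : f'.comp (C b * X) = (C b * X) * f''.comp (C b * X) := by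
          rw [hf'', mul_comp, X_comp]
        have e2 : reflect (2 * (n + 1)) (f'.comp (C b * X))
            = reflect 1 (C b * X) * reflect (2 * n + 1) (f''.comp (C b * X)) := by
          rw [e1, show 2 * (n + 1) = 1 + (2 * n + 1) by ring]
          exact reflect_mul _ _ hd1 hd2'
        have e3 : reflect 1 ((C b * X : F[X])) = C b := by
          rw [show (C b * X : F[X]) = C b * X ^ 1 by rw [pow_one],
            reflect_C_mul_X_pow, revAt_le (le_refl 1)]
          simp
        have e4 : reflect (2 * n + 1) (f''.comp (C b * X))
            = reflect (2 * n) (f''.comp (C b * X)) * X := by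
          have := reflect_mul (f''.comp (C b * X)) (1 : F[X]) hd2
            (by simp : (1 : F[X]).natDegree ≤ 1)
          rw [mul_one] at this
          rw [this]
          congr 1
          rw [show (1 : F[X]) = X ^ 0 by simp, reflect_monomial,
            revAt_le (Nat.zero_le 1), pow_one]
        have key : (C b * X) * reflect (2 * n) (f''.comp (C b * X))
            = (C b * X) * (C (b ^ n) * f'') := by
          have lhs_eq : reflect (2 * (n + 1)) (f'.comp (C b * X))
              = (C b * X) * reflect (2 * n) (f''.comp (C b * X)) := by
            rw [e2, e3, e4]; ring
          have rhs_eq : C (b ^ (n + 1)) * f' = (C b * X) * (C (b ^ n) * f'') := by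
            rw [hf'', pow_succ, C_mul]; ring
          rw [← lhs_eq, hRf', rhs_eq]
        exact mul_left_cancel₀ (mul_ne_zero (C_ne_zero.mpr hb0) X_ne_zero) key
      obtain ⟨g'', hg''deg, hg''repr⟩ := ih f'' hdeg'' hRf''
      refine ⟨C c * X ^ (n + 1) + g'', ?_, ?_⟩
      · refine le_trans (natDegree_add_le _ _) (max_le ?_ (by omega))
        exact le_trans (natDegree_C_mul_le _ _) (by simp)
      · have hgcoeff : ∀ i, i ≤ n → (C c * X ^ (n + 1) + g'').coeff i = g''.coeff i := by
          intro i hi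
          rw [coeff_add, coeff_C_mul, coeff_X_pow, if_neg (by omega)]
          ring
        have hgtop : (C c * X ^ (n + 1) + g'').coeff (n + 1) = c := by
          rw [coeff_add, coeff_C_mul, coeff_X_pow, if_pos rfl,
            coeff_eq_zero_of_natDegree_lt (by omega : g''.natDegree < n + 1)]
          ring
        have hfeq : f = C c * h + X * f'' := by
          have : f' = X * f'' := hf''
          rw [hf'def] at this
          linear_combination (norm := ring_nf) this
        rw [hfeq, Finset.sum_range_succ, hgtop, Nat.sub_self, pow_zero, mul_one, ← hhdef]
        rw [add_comm (C c * h)]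
        congr 1
        rw [hg''repr, Finset.mul_sum]
        refine Finset.sum_congr rfl fun i hi => ?_
        have hin : i ≤ n := by have := Finset.mem_range.mp hi; omega
        rw [hgcoeff i hin, show n + 1 - i = (n - i) + 1 by omega, pow_succ]
        ring

end InvariantAux



/-- For `q` odd, `b` a non-square and `f` a monic irreducible of degree
`2m` (`m ≥ 2`): `x^{2m}·f(b/x) = b^m·f(x)` iff `f(x) = x^m·g(x + b/x)` for some `g` of
degree `m`. -/
theorem invariant_type_three_iff {F : Type} [Field F] [Fintype F]
    (hodd : Odd (Fintype.card F)) (b : F) (hb0 : b ≠ 0) (hb : ¬ ∃ t : F, t ^ 2 = b)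
    (m : ℕ) (hm : 2 ≤ m)
    (f : F[X]) (hf : f.Monic) (hirr : Irreducible f) (hdeg : f.natDegree = 2 * m) :
    (∑ i ∈ Finset.range (2 * m + 1), C (f.coeff i * b ^ i) * X ^ (2 * m - i)
        = C (b ^ m) * f) ↔
    ∃ g : F[X], g.natDegree = m ∧
      f = ∑ i ∈ Finset.range (m + 1), C (g.coeff i) * (X ^ 2 + C b) ^ i * X ^ (m - i) := by
  have hN : f.natDegree ≤ 2 * m := le_of_eq hdeg
  rw [sum_eq_reflect b (2 * m) f hN]
  constructor
  · intro hrefl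
    obtain ⟨g, hgle, hgeq⟩ := exists_g_aux b hb0 m f hN hrefl
    have h1 : f.coeff (2 * m) = 1 := by
      have := hf.coeff_natDegree; rwa [hdeg] at this
    rw [hgeq, finset_sum_coeff, Finset.sum_range_succ] at h1
    have hz : ∀ i ∈ Finset.range m,
        (C (g.coeff i) * (X ^ 2 + C b) ^ i * X ^ (m - i)).coeff (2 * m) = 0 := by
      intro i hi
      have him : i < m := Finset.mem_range.mp hi
      apply coeff_eq_zero_of_natDegree_lt
      calc (C (g.coeff i) * (X ^ 2 + C b) ^ i * X ^ (m - i)).natDegree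
          ≤ (C (g.coeff i) * (X ^ 2 + C b) ^ i).natDegree + ((X : F[X]) ^ (m - i)).natDegree :=
            natDegree_mul_le
        _ ≤ (((X : F[X]) ^ 2 + C b) ^ i).natDegree + (m - i) := by
            rw [natDegree_X_pow]
            exact Nat.add_le_add_right (natDegree_C_mul_le _ _) _
        _ ≤ i * 2 + (m - i) := by
            refine Nat.add_le_add_right (le_trans natDegree_pow_le ?_) _
            rw [natDegree_X_pow_add_C]
        _ < 2 * m := by omega
    rw [Finset.sum_eq_zero hz, zero_add, Nat.sub_self, pow_zero, mul_one, coeff_C_mul] at h1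
    have hcm : ((((X : F[X]) ^ 2 + C b)) ^ m).coeff (2 * m) = 1 := by
      have hmon : (((X : F[X]) ^ 2 + C b)).Monic := monic_X_pow_add_C b two_ne_zero
      have hdm : ((((X : F[X]) ^ 2 + C b)) ^ m).natDegree = 2 * m := by
        rw [hmon.natDegree_pow, natDegree_X_pow_add_C]; ring
      have := (hmon.pow m).coeff_natDegree
      rwa [hdm] at this
    rw [hcm, mul_one] at h1
    exact ⟨g, le_antisymm hgle (le_natDegree_of_ne_zero (by rw [h1]; exact one_ne_zero)),
      hgeq⟩
  · rintro ⟨g, hgdeg, hrepr⟩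
    rw [hrepr, comp_sum', reflect_sum', Finset.mul_sum]
    refine Finset.sum_congr rfl fun i hi => ?_
    have him : i ≤ m := by have := Finset.mem_range.mp hi; omega
    have e : (C (g.coeff i) * (X ^ 2 + C b) ^ i * X ^ (m - i)).comp (C b * X)
        = C (g.coeff i) * (((((X : F[X]) ^ 2 + C b) ^ i) * X ^ (m - i)).comp (C b * X)) := by
      rw [mul_assoc, mul_comp, C_comp]
    rw [e, reflect_C_mul, reflect_basis b m i him]
    ring
end
end

section
/- Let q be a prime power and c ∈ F_q be such that x²−x−c is irreducible over F_q; let θ ∈ F_{q²} be a root of x²−x−c, let D be the order of [D(c)] in PGL₂(F_q), where D(c) = [[0,1],[c,1]], and define g_c(x) = (θ^q·(x+θ^q)^D − θ·(x+θ)^D)/(θ^q−θ) and h_c(x) = ((x+θ^q)^D − (x+θ)^D)/(θ^q−θ). Then: (i) g_c and h_c have all coefficients in F_q, are relatively prime, and have degrees D and D−1 respectively; (ii) every root of h_c lies in F_{q²}; (iii) θ^D ∈ F_q and, as polynomial identities, (x+1)^D·g_c(c/(x+1)) = θ^D·g_c(x) and (x+1)^D·h_c(c/(x+1)) = θ^D·h_c(x).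 -/
open Polynomial

noncomputable section

/-!
Let `θ' = θ ^ q`, the other root `1 - θ` of `x² - x - c`. Then `g_c - θ h_c = (x + θ')^D` and
`g_c - θ' h_c = (x + θ)^D`, whence coprimality, and Frobenius swaps `θ, θ'` and so fixes `g_c`
and `h_c`. Since `D(c)` is the matrix of multiplication by `θ` on `F_q(θ)`, `[D(c)]^n = 1` iff
`θ^n ∈ F_q` iff `ζ^n = 1` for `ζ = θ'/θ`; so `ζ` is a primitive `D`-th root of unity, which gives
`θ^D ∈ F_q` and the `D - 1` distinct roots `(θ - θ')/(1 - ζ^j) - θ` of `h_c`. Finally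
`(x + a)^D` is an eigenvector of `P ↦ (x+1)^D P(c/(x+1))` with eigenvalue `a^D` for both roots `a`.
-/

section ConjugatePair

variable {K : Type*} [Field K]

def gPoly (θ θ' : K) (n : ℕ) : K[X] :=
  C (θ' - θ)⁻¹ * (C θ' * (X + C θ') ^ n - C θ * (X + C θ) ^ n)

def hPoly (θ θ' : K) (n : ℕ) : K[X] :=
  C (θ' - θ)⁻¹ * ((X + C θ') ^ n - (X + C θ) ^ n)

theorem gPoly_comm (θ θ' : K) (n : ℕ) : gPoly θ' θ n = gPoly θ θ' n := by
  simp only [gPoly, ← neg_sub θ', inv_neg, C_neg]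
  ring

theorem hPoly_comm (θ θ' : K) (n : ℕ) : hPoly θ' θ n = hPoly θ θ' n := by
  simp only [hPoly, ← neg_sub θ', inv_neg, C_neg]
  ring

theorem map_gPoly {L : Type*} [Field L] (φ : K →+* L) (θ θ' : K) (n : ℕ) :
    (gPoly θ θ' n).map φ = gPoly (φ θ) (φ θ') n := by
  simp [gPoly, Polynomial.map_sub, map_inv₀]

theorem map_hPoly {L : Type*} [Field L] (φ : K →+* L) (θ θ' : K) (n : ℕ) :
    (hPoly θ θ' n).map φ = hPoly (φ θ) (φ θ') n := by
  simp [hPoly, Polynomial.map_sub, map_inv₀]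

variable {θ θ' : K}

theorem gPoly_sub_C_mul_hPoly (h : θ ≠ θ') (n : ℕ) :
    gPoly θ θ' n - C θ * hPoly θ θ' n = (X + C θ') ^ n := by
  have hC : C (θ' - θ)⁻¹ * (C θ' - C θ) = 1 := by
    rw [← C_sub, ← C_mul, inv_mul_cancel₀ (sub_ne_zero.2 h.symm), C_1]
  rw [gPoly, hPoly]
  linear_combination (X + C θ') ^ n * hC

theorem isCoprime_gPoly_hPoly (h : θ ≠ θ') (n : ℕ) : IsCoprime (gPoly θ θ' n) (hPoly θ θ' n) := by
  have hu := gPoly_sub_C_mul_hPoly h n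
  have hu' := gPoly_sub_C_mul_hPoly h.symm n
  rw [gPoly_comm, hPoly_comm] at hu'
  obtain ⟨a, b, hab⟩ : IsCoprime ((X + C θ) ^ n) ((X + C θ') ^ n) := by
    refine IsCoprime.pow ?_
    simpa [sub_eq_add_neg] using
      isCoprime_X_sub_C_of_isUnit_sub (sub_ne_zero.2 (neg_injective.ne h)).isUnit
  exact ⟨a + b, -(a * C θ' + b * C θ), by linear_combination hab + a * hu' + b * hu⟩

theorem natDegree_gPoly (h : θ ≠ θ') (n : ℕ) : (gPoly θ θ' n).natDegree = n := by
  refine natDegree_eq_of_le_of_coeff_ne_zero (by unfold gPoly; compute_degree) ?_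
  simp only [gPoly, coeff_C_mul, coeff_sub, coeff_X_add_C_pow, Nat.sub_self, pow_zero,
    Nat.choose_self, Nat.cast_one, mul_one]
  exact inv_mul_cancel₀ (sub_ne_zero.2 h.symm) ▸ one_ne_zero

theorem coeff_hPoly_pred (h : θ ≠ θ') {n : ℕ} (hn : n ≠ 0) :
    (hPoly θ θ' n).coeff (n - 1) = n := by
  rw [hPoly, coeff_C_mul, coeff_sub, coeff_X_add_C_pow, coeff_X_add_C_pow,
    Nat.sub_sub_self (Nat.one_le_iff_ne_zero.2 hn), pow_one, pow_one,
    Nat.choose_symm (Nat.one_le_iff_ne_zero.2 hn), Nat.choose_one_right, ← sub_mul,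
    inv_mul_cancel_left₀ (sub_ne_zero.2 h.symm)]

theorem natDegree_hPoly (h : θ ≠ θ') {n : ℕ} (hn : (n : K) ≠ 0) :
    (hPoly θ θ' n).natDegree = n - 1 := by
  have hn0 : n ≠ 0 := by rintro rfl; exact hn Nat.cast_zero
  refine natDegree_eq_of_le_of_coeff_ne_zero ?_ (coeff_hPoly_pred h hn0 ▸ hn)
  refine natDegree_le_iff_coeff_eq_zero.2 fun N hN => ?_
  rw [hPoly, coeff_C_mul, coeff_sub, coeff_X_add_C_pow, coeff_X_add_C_pow,
    Nat.sub_eq_zero_of_le (by omega), pow_zero, pow_zero, sub_self, mul_zero]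

theorem isRoot_hPoly {n : ℕ} {ζ : K} (hζn : ζ ^ n = 1) (hζ : ζ ≠ 1) :
    (hPoly θ θ' n).IsRoot ((θ - θ') / (1 - ζ) - θ) := by
  have hζ' : 1 - ζ ≠ 0 := sub_ne_zero.2 hζ.symm
  have hθ' : (θ - θ') / (1 - ζ) - θ + θ' = ζ * ((θ - θ') / (1 - ζ)) := by
    field_simp
    ring
  simp only [hPoly, IsRoot, eval_mul, eval_C, eval_sub, eval_pow, eval_add, eval_X, hθ',
    sub_add_cancel, mul_pow, hζn, one_mul, sub_self, mul_zero]

theorem splits_hPoly (h : θ ≠ θ') {n : ℕ} [NeZero n] {ζ : K} (hζ : IsPrimitiveRoot ζ n) :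
    (hPoly θ θ' n).Splits := by
  classical
  have hn : (n : K) ≠ 0 := hζ.neZero'.out
  have hne : hPoly θ θ' n ≠ 0 := fun h0 =>
    hn (by rw [← coeff_hPoly_pred h (NeZero.ne n), h0, coeff_zero])
  set α : ℕ → K := fun j => (θ - θ') / (1 - ζ ^ j) - θ
  have hα : Set.InjOn α (Finset.Ico 1 n) := by
    intro i hi j hj hij
    simp only [Finset.coe_Ico, Set.mem_Ico] at hi hj
    have hθθ' : θ - θ' ≠ 0 := sub_ne_zero.2 h
    have : 1 - ζ ^ i = 1 - ζ ^ j := by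
      simpa [α, div_eq_mul_inv, hθθ'] using hij
    exact hζ.pow_inj hi.2 hj.2 (sub_right_injective this)
  have hroots : (Finset.Ico 1 n).image α ⊆ (hPoly θ θ' n).roots.toFinset := by
    simp only [Finset.image_subset_iff, Multiset.mem_toFinset, mem_roots hne]
    intro j hj
    rw [Finset.mem_Ico] at hj
    refine isRoot_hPoly ?_ (hζ.pow_ne_one_of_pos_of_lt (by omega) hj.2)
    rw [← pow_mul, mul_comm, pow_mul, hζ.pow_eq_one, one_pow]
  refine splits_iff_card_roots.2 (le_antisymm (card_roots' _) ?_)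
  calc (hPoly θ θ' n).natDegree = ((Finset.Ico 1 n).image α).card := by
        rw [natDegree_hPoly h hn, Finset.card_image_of_injOn hα, Nat.card_Ico]
    _ ≤ (hPoly θ θ' n).roots.toFinset.card := Finset.card_le_card hroots
    _ ≤ Multiset.card (hPoly θ θ' n).roots := Multiset.toFinset_card_le _

/-- `(X + 1) ^ n * P (c / (X + 1))` for polynomials `P` of degree at most `n`. -/
def moebiusSubst (c : K) (n : ℕ) : K[X] →ₗ[K] K[X] where
  toFun P := ∑ i ∈ Finset.range (n + 1), C (P.coeff i * c ^ i) * (X + 1) ^ (n - i)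
  map_add' P Q := by simp only [coeff_add, add_mul, C_add, Finset.sum_add_distrib]
  map_smul' a P := by
    simp only [smul_eq_C_mul, coeff_C_mul, mul_assoc, C_mul, Finset.mul_sum, RingHom.id_apply]

theorem moebiusSubst_C_mul (c a : K) (n : ℕ) (P : K[X]) :
    moebiusSubst c n (C a * P) = C a * moebiusSubst c n P := by
  rw [← smul_eq_C_mul, map_smul, smul_eq_C_mul]

theorem moebiusSubst_X_add_C_pow {c a : K} (ha : a ^ 2 = a + c) (n : ℕ) :
    moebiusSubst c n ((X + C a) ^ n) = C (a ^ n) * (X + C a) ^ n := by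
  -- homogenizing `(X + a) ^ n` at `c / (X + 1)` gives `(c + a (X + 1)) ^ n = (a (X + a)) ^ n`
  have hlin : C c + C a * (X + 1) = C a * (X + C a) := by
    have hC : C a ^ 2 = C a + C c := by rw [← C_pow, ha, C_add]
    linear_combination -hC
  have hterm : ∀ i ∈ Finset.range (n + 1), C (((X + C a) ^ n).coeff i * c ^ i) * (X + 1) ^ (n - i)
      = C c ^ i * (C a * (X + 1)) ^ (n - i) * (n.choose i : K[X]) := by
    intro i _
    rw [coeff_X_add_C_pow, mul_pow, ← C_pow, ← C_pow, ← C_eq_natCast]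
    simp only [C_mul]
    ring
  simp only [moebiusSubst, LinearMap.coe_mk, AddHom.coe_mk]
  rw [Finset.sum_congr rfl hterm, ← (Commute.all _ _).add_pow, hlin, mul_pow, C_pow]

theorem moebiusSubst_gPoly {c : K} (hθ : θ ^ 2 = θ + c) (hθ' : θ' ^ 2 = θ' + c) {n : ℕ}
    (hpow : θ' ^ n = θ ^ n) : moebiusSubst c n (gPoly θ θ' n) = C (θ ^ n) * gPoly θ θ' n := by
  simp only [gPoly, moebiusSubst_C_mul, map_sub, moebiusSubst_X_add_C_pow hθ,
    moebiusSubst_X_add_C_pow hθ', hpow]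
  ring

theorem moebiusSubst_hPoly {c : K} (hθ : θ ^ 2 = θ + c) (hθ' : θ' ^ 2 = θ' + c) {n : ℕ}
    (hpow : θ' ^ n = θ ^ n) : moebiusSubst c n (hPoly θ θ' n) = C (θ ^ n) * hPoly θ θ' n := by
  simp only [hPoly, moebiusSubst_C_mul, map_sub, moebiusSubst_X_add_C_pow hθ,
    moebiusSubst_X_add_C_pow hθ', hpow]
  ring

end ConjugatePair

section PGL

variable {F : Type} [Field F] {K : Type*} [Field K] [Algebra F K]

theorem notMem_range_of_irreducible {p : F[X]} (hp : Irreducible p) (hdeg : p.degree ≠ 1)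
    {θ : K} (hθ : aeval θ p = 0) : θ ∉ (algebraMap F K).range := by
  rintro ⟨t, rfl⟩
  rw [aeval_algebraMap_apply, map_eq_zero_iff _ (algebraMap F K).injective] at hθ
  exact hdeg (degree_eq_one_of_irreducible_of_root hp hθ)

theorem algebraMap_add_mul_mem_range_iff {θ : K} (hθ : θ ∉ (algebraMap F K).range) (a b : F) :
    algebraMap F K a + algebraMap F K b * θ ∈ (algebraMap F K).range ↔ b = 0 := by
  refine ⟨fun ⟨t, ht⟩ => by_contra fun hb => hθ ⟨(t - a) / b, ?_⟩, fun hb => ⟨a, by simp [hb]⟩⟩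
  have hb' : algebraMap F K b ≠ 0 := (_root_.map_ne_zero _).2 hb
  rw [map_div₀, map_sub, ht]
  field_simp
  ring

theorem mem_scalarSub_iff {A : GL (Fin 2) F} :
    A ∈ PGLAct.scalarSub F ↔ A.val 0 1 = 0 ∧ A.val 1 0 = 0 ∧ A.val 0 0 = A.val 1 1 := by
  constructor
  · rintro ⟨u, rfl⟩
    simp [Matrix.scalar]
  · rintro ⟨h01, h10, h00⟩
    have hA : A.val = Matrix.scalar (Fin 2) (A.val 0 0) := by
      ext i j
      fin_cases i <;> fin_cases j <;> simp [h01, h10, h00]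
    have h0 : A.val 0 0 ≠ 0 := fun h0 => A.ne_zero (by rw [hA, h0, map_zero])
    exact ⟨Units.mk0 _ h0, Units.ext hA.symm⟩

variable {c : F} {θ : K} {M : GL (Fin 2) F}

theorem exists_val_pow_eq_of_companion (hθ : θ ^ 2 = θ + algebraMap F K c)
    (hM : M.val = !![0, 1; c, 1]) (n : ℕ) :
    ∃ a b : F, (M ^ n).val = !![a, b; c * b, a + b] ∧
      θ ^ n = algebraMap F K a + algebraMap F K b * θ := by
  induction n with
  | zero => exact ⟨1, 0, by simp [Matrix.one_fin_two], by simp⟩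
  | succ n ih =>
    obtain ⟨a, b, hMn, hθn⟩ := ih
    refine ⟨b * c, a + b, ?_, ?_⟩
    · rw [pow_succ, Units.val_mul, hMn, hM, Matrix.mul_fin_two]
      ext i j
      fin_cases i <;> fin_cases j <;> simp <;> ring
    · rw [pow_succ, hθn, map_mul, map_add]
      linear_combination algebraMap F K b * hθ

theorem toPGL_pow_eq_one_iff (hθ : θ ^ 2 = θ + algebraMap F K c)
    (hθF : θ ∉ (algebraMap F K).range) (hM : M.val = !![0, 1; c, 1]) (n : ℕ) :
    PGLAct.toPGL F M ^ n = 1 ↔ θ ^ n ∈ (algebraMap F K).range := by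
  obtain ⟨a, b, hMn, hθn⟩ := exists_val_pow_eq_of_companion hθ hM n
  rw [← map_pow, hθn, algebraMap_add_mul_mem_range_iff hθF]
  refine (QuotientGroup.eq_one_iff (M ^ n)).trans ?_
  rw [mem_scalarSub_iff, hMn]
  simp +contextual

end PGL

section FiniteField

variable {F : Type} [Field F] [Fintype F] {K : Type*} [Field K] [Algebra F K]

theorem pow_card_sq_eq {c : F} {θ : K} (hθ : θ ^ 2 = θ + algebraMap F K c) :
    (θ ^ Fintype.card F) ^ 2 = θ ^ Fintype.card F + algebraMap F K c := by
  have := congrArg (FiniteField.frobeniusAlgHom F K) hθ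
  rwa [map_pow, map_add, AlgHom.commutes] at this

variable [Finite K]

theorem mem_range_algebraMap_iff_pow_card (x : K) :
    x ∈ (algebraMap F K).range ↔ x ^ Fintype.card F = x := by
  refine ⟨by rintro ⟨a, rfl⟩; rw [← map_pow, FiniteField.pow_card], fun hx => ?_⟩
  refine (IsGalois.mem_range_algebraMap_iff_fixed x).2 fun f => ?_
  obtain ⟨n, rfl⟩ := (FiniteField.bijective_frobeniusAlgEquivOfAlgebraic_pow F K).2 f
  simp only [AlgEquiv.coe_pow, FiniteField.coe_frobeniusAlgEquivOfAlgebraic]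
  exact Function.iterate_fixed hx n

theorem coeff_mem_range_of_map_frobenius {P : K[X]}
    (hP : P.map (FiniteField.frobeniusAlgHom F K : K →+* K) = P) (i : ℕ) :
    P.coeff i ∈ (algebraMap F K).range :=
  (mem_range_algebraMap_iff_pow_card _).2 (by simpa using congrArg (coeff · i) hP)

theorem div_pow_eq_one_iff_pow_mem_range {θ : K} (hθ : θ ≠ 0) (n : ℕ) :
    (θ ^ Fintype.card F / θ) ^ n = 1 ↔ θ ^ n ∈ (algebraMap F K).range := by
  rw [mem_range_algebraMap_iff_pow_card, div_pow, div_eq_one_iff_eq (pow_ne_zero _ hθ),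
    ← pow_mul, ← pow_mul, mul_comm]

theorem orderOf_toPGL_eq {c : F} {θ : K} {M : GL (Fin 2) F} (hθ : θ ^ 2 = θ + algebraMap F K c)
    (hθF : θ ∉ (algebraMap F K).range) (hM : M.val = !![0, 1; c, 1]) :
    orderOf (PGLAct.toPGL F M) = orderOf (θ ^ Fintype.card F / θ) := by
  have hθ0 : θ ≠ 0 := fun h0 => hθF ⟨0, by rw [h0, map_zero]⟩
  refine orderOf_eq_orderOf_iff.2 fun n => ?_
  rw [toPGL_pow_eq_one_iff hθ hθF hM, div_pow_eq_one_iff_pow_mem_range hθ0]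

theorem orderOf_ne_zero_of_ne_zero {z : K} (hz : z ≠ 0) : orderOf z ≠ 0 := by
  have := Fintype.ofFinite K
  refine orderOf_ne_zero_iff.2 (isOfFinOrder_iff_pow_eq_one.2 ⟨Fintype.card K - 1, ?_, ?_⟩)
  · have := Fintype.one_lt_card (α := K)
    omega
  · exact FiniteField.pow_card_sub_one_eq_one z hz

variable {c : F} {θ : K}

theorem pow_card_pow_card_eq_self (hθ : θ ^ 2 = θ + algebraMap F K c)
    (hθF : θ ∉ (algebraMap F K).range) : (θ ^ Fintype.card F) ^ Fintype.card F = θ := by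
  have hne : θ ^ Fintype.card F - θ ≠ 0 :=
    sub_ne_zero.2 fun h => hθF ((mem_range_algebraMap_iff_pow_card θ).2 h)
  have hsum : θ ^ Fintype.card F = 1 - θ := by
    have := pow_card_sq_eq hθ
    have h0 : (θ ^ Fintype.card F - θ) * (θ ^ Fintype.card F + θ - 1) = 0 := by
      linear_combination this - hθ
    linear_combination (mul_eq_zero.1 h0).resolve_left hne
  have := congrArg (FiniteField.frobeniusAlgHom F K) hsum
  rw [map_sub, map_one] at this
  simp only [FiniteField.frobeniusAlgHom_apply] at this
  rw [this, hsum, sub_sub_cancel]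

end FiniteField

theorem type_four_rational_function_general {F K : Type} [Field F] [Fintype F] [Field K] [Fintype K]
    [Algebra F K]
    (c : F) (hc : Irreducible (X ^ 2 - X - C c : F[X]))
    (θ : K) (hθ : θ ^ 2 - θ - algebraMap F K c = 0)
    (M : GL (Fin 2) F) (hM : M.val = !![0, 1; c, 1])
    (D : ℕ) (hD : D = orderOf (PGLAct.toPGL F M))
    (g h : K[X])
    (hg : g = C (θ ^ Fintype.card F - θ)⁻¹ *
      (C (θ ^ Fintype.card F) * (X + C (θ ^ Fintype.card F)) ^ D - C θ * (X + C θ) ^ D))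
    (hh : h = C (θ ^ Fintype.card F - θ)⁻¹ *
      ((X + C (θ ^ Fintype.card F)) ^ D - (X + C θ) ^ D)) :
    ((∀ i, g.coeff i ∈ (algebraMap F K).range) ∧ (∀ i, h.coeff i ∈ (algebraMap F K).range) ∧
      IsCoprime g h ∧ g.natDegree = D ∧ h.natDegree = D - 1) ∧
    (h.Splits) ∧
    (θ ^ D ∈ (algebraMap F K).range ∧
      (∑ i ∈ Finset.range (D + 1),
          C (g.coeff i * (algebraMap F K c) ^ i) * (X + 1) ^ (D - i) = C (θ ^ D) * g) ∧
      (∑ i ∈ Finset.range (D + 1),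
          C (h.coeff i * (algebraMap F K c) ^ i) * (X + 1) ^ (D - i) = C (θ ^ D) * h)) := by
  set q := Fintype.card F
  have hθ2 : θ ^ 2 = θ + algebraMap F K c := by linear_combination hθ
  have hθF : θ ∉ (algebraMap F K).range :=
    have hdeg : (X ^ 2 - X - C c : F[X]).degree = 2 := by compute_degree!
    notMem_range_of_irreducible hc (by rw [hdeg]; decide) (by simpa using hθ)
  have hθ0 : θ ≠ 0 := fun h0 => hθF ⟨0, by rw [h0, map_zero]⟩
  have hθθ' : θ ≠ θ ^ q := fun h => hθF ((mem_range_algebraMap_iff_pow_card θ).2 h.symm)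
  have hDz : D = orderOf (θ ^ q / θ) := hD.trans (orderOf_toPGL_eq hθ2 hθF hM)
  have hprim : IsPrimitiveRoot (θ ^ q / θ) D := hDz ▸ IsPrimitiveRoot.orderOf _
  have : NeZero D := ⟨hDz ▸ orderOf_ne_zero_of_ne_zero (div_ne_zero (pow_ne_zero q hθ0) hθ0)⟩
  have hθD : θ ^ D ∈ (algebraMap F K).range :=
    (div_pow_eq_one_iff_pow_mem_range hθ0 D).1 hprim.pow_eq_one
  have hθ'D : (θ ^ q) ^ D = θ ^ D := by
    rw [← pow_mul, mul_comm, pow_mul]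
    exact (mem_range_algebraMap_iff_pow_card _).1 hθD
  have hfrob : FiniteField.frobeniusAlgHom F K (θ ^ q) = θ := pow_card_pow_card_eq_self hθ2 hθF
  obtain rfl : g = gPoly θ (θ ^ q) D := hg
  obtain rfl : h = hPoly θ (θ ^ q) D := hh
  refine ⟨⟨coeff_mem_range_of_map_frobenius ?_, coeff_mem_range_of_map_frobenius ?_,
    isCoprime_gPoly_hPoly hθθ' D, natDegree_gPoly hθθ' D, natDegree_hPoly hθθ' hprim.neZero'.out⟩,
    splits_hPoly hθθ' hprim, hθD, moebiusSubst_gPoly hθ2 (pow_card_sq_eq hθ2) hθ'D,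
    moebiusSubst_hPoly hθ2 (pow_card_sq_eq hθ2) hθ'D⟩
  · rw [map_gPoly, AlgHom.coe_toRingHom, hfrob, FiniteField.frobeniusAlgHom_apply, gPoly_comm]
  · rw [map_hPoly, AlgHom.coe_toRingHom, hfrob, FiniteField.frobeniusAlgHom_apply, hPoly_comm]

/-- Properties of the rational function `Q_c = g_c/h_c` attached to the
type-4 element `D(c)`: `g_c, h_c` have coefficients in `F_q`, are coprime of degrees `D` and
`D-1`, all roots of `h_c` lie in `F_{q²}`, `θ^D ∈ F_q`, and both satisfy
`(x+1)^D·P(c/(x+1)) = θ^D·P(x)`. -/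
theorem type_four_rational_function {F K : Type} [Field F] [Fintype F] [Field K] [Fintype K]
    [Algebra F K] (hK : Fintype.card K = Fintype.card F ^ 2)
    (c : F) (hc : Irreducible (X ^ 2 - X - C c : F[X]))
    (θ : K) (hθ : θ ^ 2 - θ - algebraMap F K c = 0)
    (M : GL (Fin 2) F) (hM : M.val = !![0, 1; c, 1])
    (D : ℕ) (hD : D = orderOf (PGLAct.toPGL F M))
    (g h : K[X])
    (hg : g = C (θ ^ Fintype.card F - θ)⁻¹ *
      (C (θ ^ Fintype.card F) * (X + C (θ ^ Fintype.card F)) ^ D - C θ * (X + C θ) ^ D))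
    (hh : h = C (θ ^ Fintype.card F - θ)⁻¹ *
      ((X + C (θ ^ Fintype.card F)) ^ D - (X + C θ) ^ D)) :
    ((∀ i, g.coeff i ∈ (algebraMap F K).range) ∧ (∀ i, h.coeff i ∈ (algebraMap F K).range) ∧
      IsCoprime g h ∧ g.natDegree = D ∧ h.natDegree = D - 1) ∧
    (h.Splits) ∧
    (θ ^ D ∈ (algebraMap F K).range ∧
      (∑ i ∈ Finset.range (D + 1),
          C (g.coeff i * (algebraMap F K c) ^ i) * (X + 1) ^ (D - i) = C (θ ^ D) * g) ∧
      (∑ i ∈ Finset.range (D + 1),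
          C (h.coeff i * (algebraMap F K c) ^ i) * (X + 1) ^ (D - i) = C (θ ^ D) * h)) :=
  type_four_rational_function_general c hc θ hθ M hM D hD g h hg hh
end
end
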